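/- arXiv:1812.03782 — 6 statements merged into one kernel-verified Lean document; each statement's English description precedes it below -/
import Mathlib

section
/- Let n ≥ 3. Every continuous group homomorphism from SO(n) to U(2) is trivial, i.e., sends every element of SO(n) to the identity matrix. -/
namespace SOU2
open Matrix
variable {n : ℕ}

def giv (i j : Fin n) (c s : ℝ) : Matrix (Fin n) (Fin n) ℝ :=
  Matrix.of fun p q =>
    if p = i then (if q = i then c else if q = j then -s else 0)
    else if p = j then (if q = i then s else if q = j then c else 0)
    else if p = q then 1 else 0

lemma giv_apply (i j : Fin n) (c s : ℝ) (p q : Fin n) :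
    giv i j c s p q =
      if p = i then (if q = i then c else if q = j then -s else 0)
      else if p = j then (if q = i then s else if q = j then c else 0)
      else if p = q then 1 else 0 := rfl

lemma giv_one (i j : Fin n) : giv i j 1 0 = 1 := by
  ext p q
  simp only [giv_apply, Matrix.one_apply, neg_zero]
  split_ifs <;> simp_all

lemma giv_mul_apply {i j : Fin n} (hij : i ≠ j) (c s : ℝ) (M : Matrix (Fin n) (Fin n) ℝ)
    (p q : Fin n) :
    (giv i j c s * M) p q =
      if p = i then c * M i q - s * M j q
      else if p = j then s * M i q + c * M j q
      else M p q := by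
  rw [Matrix.mul_apply]
  by_cases hpi : p = i
  · have hrow : ∀ x, giv i j c s p x * M x q
        = (if x = i then c * M i q else 0) + (if x = j then (-s) * M j q else 0) := by
      intro x
      rcases eq_or_ne x i with hxi | hxi <;> rcases eq_or_ne x j with hxj | hxj <;>
        simp [giv_apply, hpi, hxi, hxj, hij] <;> simp_all
    rw [Finset.sum_congr rfl fun x _ => hrow x, Finset.sum_add_distrib]
    simp [hpi, sub_eq_add_neg]
  · by_cases hpj : p = j
    · have hrow : ∀ x, giv i j c s p x * M x q
          = (if x = i then s * M i q else 0) + (if x = j then c * M j q else 0) := by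
        intro x
        rcases eq_or_ne x i with hxi | hxi <;> rcases eq_or_ne x j with hxj | hxj <;>
          simp [giv_apply, hpi, hpj, hxi, hxj, hij] <;> simp_all
      rw [Finset.sum_congr rfl fun x _ => hrow x, Finset.sum_add_distrib]
      simp [hpi, hpj, Ne.symm hij]
    · have hrow : ∀ x, giv i j c s p x * M x q = (if x = p then M p q else 0) := by
        intro x
        rcases eq_or_ne x p with hxp | hxp
        · simp [giv_apply, hpi, hpj, hxp]
        · rcases eq_or_ne x i with hxi | hxi <;> rcases eq_or_ne x j with hxj | hxj <;>
            simp [giv_apply, hpi, hpj, hxp, hxi, hxj, Ne.symm hxp] <;> simp_all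
      rw [Finset.sum_congr rfl fun x _ => hrow x]
      simp [hpi, hpj]

lemma giv_star {i j : Fin n} (hij : i ≠ j) (c s : ℝ) :
    star (giv i j c s) = giv i j c (-s) := by
  ext p q
  simp only [Matrix.star_apply, star_trivial, giv_apply, neg_neg]
  rcases eq_or_ne p i with hpi | hpi <;> rcases eq_or_ne p j with hpj | hpj <;>
    rcases eq_or_ne q i with hqi | hqi <;> rcases eq_or_ne q j with hqj | hqj <;>
    simp_all [eq_comm, Ne.symm hij]

lemma giv_mul_giv {i j : Fin n} (hij : i ≠ j) (c s c' s' : ℝ) :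
    giv i j c s * giv i j c' s' = giv i j (c * c' - s * s') (c * s' + s * c') := by
  ext p q
  rw [giv_mul_apply hij]
  simp only [giv_apply]
  split_ifs <;> simp_all <;> ring

lemma giv_swap_comm {i j k : Fin n} (hij : i ≠ j) (hik : i ≠ k) (hjk : j ≠ k) :
    giv i k 0 1 * giv i j (-1) 0 = giv k j (-1) 0 * giv i k 0 1 := by
  ext p q
  rw [giv_mul_apply hik, giv_mul_apply hjk.symm]
  rcases eq_or_ne p i with hpi | hpi <;> rcases eq_or_ne p j with hpj | hpj <;>
    rcases eq_or_ne p k with hpk | hpk <;> rcases eq_or_ne q i with hqi | hqi <;>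
    rcases eq_or_ne q j with hqj | hqj <;> rcases eq_or_ne q k with hqk | hqk <;>
    simp_all [giv_apply, eq_comm, Ne.symm hij, Ne.symm hik, Ne.symm hjk]

lemma giv_swap_comm' {i j k : Fin n} (hij : i ≠ j) (hik : i ≠ k) (hjk : j ≠ k) :
    giv j k 0 1 * giv i j (-1) 0 = giv i k (-1) 0 * giv j k 0 1 := by
  ext p q
  rw [giv_mul_apply hjk, giv_mul_apply hik]
  rcases eq_or_ne p i with hpi | hpi <;> rcases eq_or_ne p j with hpj | hpj <;>
    rcases eq_or_ne p k with hpk | hpk <;> rcases eq_or_ne q i with hqi | hqi <;>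
    rcases eq_or_ne q j with hqj | hqj <;> rcases eq_or_ne q k with hqk | hqk <;>
    simp_all [giv_apply, eq_comm, Ne.symm hij, Ne.symm hik, Ne.symm hjk]

lemma E_mul_E {i j k : Fin n} (hij : i ≠ j) (hik : i ≠ k) (hjk : j ≠ k) :
    giv i j (-1) 0 * giv k j (-1) 0 = giv i k (-1) 0 := by
  ext p q
  rw [giv_mul_apply hij]
  rcases eq_or_ne p i with hpi | hpi <;> rcases eq_or_ne p j with hpj | hpj <;>
    rcases eq_or_ne p k with hpk | hpk <;> rcases eq_or_ne q i with hqi | hqi <;>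
    rcases eq_or_ne q j with hqj | hqj <;> rcases eq_or_ne q k with hqk | hqk <;>
    simp_all [giv_apply, eq_comm, Ne.symm hij, Ne.symm hik, Ne.symm hjk]

lemma E_comm_giv {i j k : Fin n} (hij : i ≠ j) (hik : i ≠ k) (hjk : j ≠ k) (c s : ℝ) :
    giv j k (-1) 0 * giv i j c s = giv i j c (-s) * giv j k (-1) 0 := by
  ext p q
  rw [giv_mul_apply hjk, giv_mul_apply hij]
  rcases eq_or_ne p i with hpi | hpi <;> rcases eq_or_ne p j with hpj | hpj <;>
    rcases eq_or_ne p k with hpk | hpk <;> rcases eq_or_ne q i with hqi | hqi <;>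
    rcases eq_or_ne q j with hqj | hqj <;> rcases eq_or_ne q k with hqk | hqk <;>
    simp_all [giv_apply, eq_comm, Ne.symm hij, Ne.symm hik, Ne.symm hjk] <;> ring

lemma half_angle {c s : ℝ} (h : c ^ 2 + s ^ 2 = 1) :
    ∃ c' s' : ℝ, c' ^ 2 + s' ^ 2 = 1 ∧ c = c' ^ 2 - s' ^ 2 ∧ s = 2 * (c' * s') := by
  have hc1 : c ≤ 1 := by nlinarith [sq_nonneg s]
  have hc2 : -1 ≤ c := by nlinarith [sq_nonneg s]
  refine ⟨Real.sqrt ((1 + c) / 2), (if 0 ≤ s then 1 else -1) * Real.sqrt ((1 - c) / 2), ?_, ?_, ?_⟩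
  · rw [mul_pow, Real.sq_sqrt (by linarith), Real.sq_sqrt (by linarith)]
    split_ifs <;> ring
  · rw [mul_pow, Real.sq_sqrt (by linarith), Real.sq_sqrt (by linarith)]
    split_ifs <;> ring
  · have hs2 : (1 + c) / 2 * ((1 - c) / 2) = (s / 2) ^ 2 := by nlinarith []
    rw [show (2 : ℝ) * (Real.sqrt ((1 + c) / 2) * ((if 0 ≤ s then 1 else -1) * Real.sqrt ((1 - c) / 2)))
        = (if 0 ≤ s then 1 else -1) * (2 * (Real.sqrt ((1 + c) / 2) * Real.sqrt ((1 - c) / 2))) from by ring,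
      ← Real.sqrt_mul (by linarith), hs2, Real.sqrt_sq_eq_abs]
    rcases le_or_gt 0 s with hs | hs
    · rw [if_pos hs, abs_of_nonneg (by linarith)]; ring
    · rw [if_neg (not_le.mpr hs), abs_of_nonpos (by linarith)]; ring

lemma giv_mul_star {i j : Fin n} (hij : i ≠ j) {c s : ℝ} (h : c ^ 2 + s ^ 2 = 1) :
    giv i j c s * star (giv i j c s) = 1 := by
  rw [giv_star hij, giv_mul_giv hij,
    show c * c - s * -s = 1 from by nlinarith [], show c * -s + s * c = 0 from by ring, giv_one]

lemma giv_mem {i j : Fin n} (hij : i ≠ j) {c s : ℝ} (h : c ^ 2 + s ^ 2 = 1) :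
    giv i j c s ∈ Matrix.specialOrthogonalGroup (Fin n) ℝ := by
  rw [Matrix.mem_specialOrthogonalGroup_iff]
  constructor
  · rw [Matrix.mem_orthogonalGroup_iff]
    exact giv_mul_star hij h
  · obtain ⟨c', s', h1, hc, hs⟩ := half_angle h
    have e1 : c' * c' - s' * s' = c := by rw [hc]; ring
    have e2 : c' * s' + s' * c' = s := by rw [hs]; ring
    have hgg : giv i j c s = giv i j c' s' * giv i j c' s' := by
      rw [giv_mul_giv hij, e1, e2]
    have hsm : star (giv i j c' s') = (giv i j c' s')ᵀ := by
      ext p q; simp [Matrix.star_apply]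
    have hP : (giv i j c' s').det * (giv i j c' s').det = 1 := by
      have hd := congrArg Matrix.det (giv_mul_star hij h1)
      rwa [Matrix.det_mul, hsm, Matrix.det_transpose, Matrix.det_one] at hd
    rw [hgg, Matrix.det_mul, hP]


/-! ### Generation of SO(n) by Givens rotations -/

def gens (n : ℕ) : Set ↥(Matrix.specialOrthogonalGroup (Fin n) ℝ) :=
  { g | ∃ (i j : Fin n) (c s : ℝ) (_ : i ≠ j) (_ : c ^ 2 + s ^ 2 = 1),
      (g : Matrix (Fin n) (Fin n) ℝ) = giv i j c s }

lemma so_orth (g : ↥(Matrix.specialOrthogonalGroup (Fin n) ℝ)) :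
    star (g : Matrix (Fin n) (Fin n) ℝ) * (g : Matrix (Fin n) (Fin n) ℝ) = 1 :=
  (Matrix.mem_orthogonalGroup_iff' _ _).mp ((Matrix.mem_specialOrthogonalGroup_iff.mp g.2).1)

lemma so_det (g : ↥(Matrix.specialOrthogonalGroup (Fin n) ℝ)) :
    (g : Matrix (Fin n) (Fin n) ℝ).det = 1 :=
  (Matrix.mem_specialOrthogonalGroup_iff.mp g.2).2

lemma col_orth (A : Matrix (Fin n) (Fin n) ℝ) (hA : star A * A = 1) (p q : Fin n) :
    ∑ r, A r p * A r q = (1 : Matrix (Fin n) (Fin n) ℝ) p q := by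
  have h2 : (star A * A) p q = (1 : Matrix (Fin n) (Fin n) ℝ) p q := by rw [hA]
  rw [Matrix.mul_apply] at h2
  simpa [Matrix.star_apply] using h2

lemma entry_zero_of_id_col (A : Matrix (Fin n) (Fin n) ℝ) (hA : star A * A = 1) (p q : Fin n)
    (hcol : ∀ r, A r p = (1 : Matrix (Fin n) (Fin n) ℝ) r p) (hpq : p ≠ q) : A p q = 0 := by
  have h1 := col_orth A hA p q
  have h3 : ∀ r, A r p * A r q = if r = p then A p q else 0 := by
    intro r
    rw [hcol r, Matrix.one_apply]
    split_ifs with h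
    · rw [h, one_mul]
    · rw [zero_mul]
  rw [Finset.sum_congr rfl fun r _ => h3 r, Finset.sum_ite_eq' Finset.univ p] at h1
  simpa [Matrix.one_apply, hpq] using h1

lemma diag_norm (A : Matrix (Fin n) (Fin n) ℝ) (hA : star A * A = 1) (k : Fin n)
    (hzero : ∀ p, p ≠ k → A p k = 0) : A k k * A k k = 1 := by
  have h1 := col_orth A hA k k
  have h3 : ∀ r, A r k * A r k = if r = k then A k k * A k k else 0 := by
    intro r
    split_ifs with h
    · rw [h]
    · rw [hzero r h, zero_mul]
  rw [Finset.sum_congr rfl fun r _ => h3 r, Finset.sum_ite_eq' Finset.univ k] at h1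
  simpa [Matrix.one_apply] using h1

theorem mem_closure_of_cols (m : ℕ) (g : ↥(Matrix.specialOrthogonalGroup (Fin n) ℝ))
    (hg : ∀ j p : Fin n, (j : ℕ) < n - m →
      (g : Matrix (Fin n) (Fin n) ℝ) p j = (1 : Matrix (Fin n) (Fin n) ℝ) p j) :
    g ∈ Submonoid.closure (gens n) := by
  induction m generalizing g with
  | zero =>
    have : g = 1 := by
      apply Subtype.ext
      ext p q
      exact hg q p (by simpa using q.isLt)
    rw [this]; exact one_mem _
  | succ m IH =>
    by_cases hmn : n ≤ m
    · exact IH g (fun j p hj => hg j p (by omega))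
    have hm : m < n := lt_of_not_ge hmn
    have hkn : n - m - 1 < n := by omega
    set k : Fin n := ⟨n - m - 1, hkn⟩ with hk
    have hkval : (k : ℕ) = n - m - 1 := rfl
    -- inner clearing of column k below the diagonal
    have clear : ∀ (d : ℕ) (g : ↥(Matrix.specialOrthogonalGroup (Fin n) ℝ)),
        (∀ j p : Fin n, (j : ℕ) < n - m - 1 →
          (g : Matrix (Fin n) (Fin n) ℝ) p j = (1 : Matrix (Fin n) (Fin n) ℝ) p j) →
        (∀ p : Fin n, d ≤ (p : ℕ) → p ≠ k → (g : Matrix (Fin n) (Fin n) ℝ) p k = 0) →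
        g ∈ Submonoid.closure (gens n) := by
      intro d
      induction d with
      | zero =>
        intro g hcols hzero
        have hzero' : ∀ p, p ≠ k → (g : Matrix (Fin n) (Fin n) ℝ) p k = 0 :=
          fun p hp => hzero p (Nat.zero_le _) hp
        have hnorm := diag_norm _ (so_orth g) k hzero'
        rcases mul_self_eq_one_iff.mp hnorm with h1 | h1
        · -- diagonal entry +1 : column k is now e_k, use outer IH
          apply IH g
          intro j p hj
          by_cases hj1 : (j : ℕ) < n - m - 1
          · exact hcols j p hj1
          · have hjk : j = k := Fin.ext (by omega)
            rw [hjk]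
            by_cases hpk : p = k
            · rw [hpk, h1, Matrix.one_apply_eq]
            · rw [hzero' p hpk, Matrix.one_apply_ne hpk]
        · -- diagonal entry -1
          by_cases hlast : n - m < n
          · set p1 : Fin n := ⟨n - m, hlast⟩ with hp1
            have hp1val : (p1 : ℕ) = n - m := rfl
            have hkp1 : k ≠ p1 := by
              intro e
              have := congrArg Fin.val e
              simp [hk, hp1] at this
              omega
            have hEmem := giv_mem hkp1 (show (-1 : ℝ) ^ 2 + 0 ^ 2 = 1 by norm_num)
            set E : ↥(Matrix.specialOrthogonalGroup (Fin n) ℝ) := ⟨giv k p1 (-1) 0, hEmem⟩ with hE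
            have hg'mat : ((E * g : _) : Matrix (Fin n) (Fin n) ℝ)
                = giv k p1 (-1) 0 * (g : Matrix (Fin n) (Fin n) ℝ) := rfl
            have hg'' : (E * g) ∈ Submonoid.closure (gens n) := by
              apply IH (E * g)
              intro j p hj
              rw [hg'mat, giv_mul_apply hkp1]
              by_cases hj1 : (j : ℕ) < n - m - 1
              · have hkj : k ≠ j := by
                  intro e; rw [← e, hkval] at hj1; omega
                have hp1j : p1 ≠ j := by
                  intro e; rw [← e, hp1val] at hj1; omega
                rw [hcols j k hj1, hcols j p1 hj1,
                  Matrix.one_apply_ne hkj, Matrix.one_apply_ne hp1j]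
                split_ifs with h1' h2'
                · rw [h1', Matrix.one_apply_ne hkj]; ring
                · rw [h2', Matrix.one_apply_ne hp1j]; ring
                · exact hcols j p hj1
              · have hjk : j = k := Fin.ext (by omega)
                rw [hjk, h1]
                split_ifs with h1' h2'
                · rw [h1', Matrix.one_apply_eq]; ring
                · rw [h2', hzero' p1 hkp1.symm, Matrix.one_apply_ne hkp1.symm]; ring
                · rw [hzero' p h1', Matrix.one_apply_ne h1']
            have hEE : E * E = 1 := by
              apply Subtype.ext
              show giv k p1 (-1) 0 * giv k p1 (-1) 0 = _
              rw [giv_mul_giv hkp1,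
                show (-1 : ℝ) * -1 - 0 * 0 = 1 by ring, show (-1 : ℝ) * 0 + 0 * -1 = 0 by ring,
                giv_one]
              rfl
            have hgEg : g = E * (E * g) := by rw [← mul_assoc, hEE, one_mul]
            rw [hgEg]
            exact mul_mem (Submonoid.subset_closure
              ⟨k, p1, -1, 0, hkp1, by norm_num, rfl⟩) hg''
          · -- k is the last column : determinant contradiction
            exfalso
            have hdiag : (g : Matrix (Fin n) (Fin n) ℝ)
                = Matrix.diagonal (fun p => if p = k then (-1 : ℝ) else 1) := by
              ext p q
              by_cases hq1 : (q : ℕ) < n - m - 1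
              · have hqk : q ≠ k := by intro e; rw [e, hkval] at hq1; omega
                rw [hcols q p hq1]
                by_cases hpq : p = q
                · rw [hpq, Matrix.one_apply_eq, Matrix.diagonal_apply_eq, if_neg hqk]
                · rw [Matrix.one_apply_ne hpq, Matrix.diagonal_apply_ne _ hpq]
              · have hqk : q = k := Fin.ext (by omega)
                rw [hqk]
                by_cases hpq : p = k
                · rw [hpq, h1, Matrix.diagonal_apply_eq, if_pos rfl]
                · rw [hzero' p hpq, Matrix.diagonal_apply_ne _ hpq]
            have hdet := so_det g
            rw [hdiag, Matrix.det_diagonal] at hdet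
            rw [Finset.prod_ite_eq' Finset.univ k (fun _ => (-1 : ℝ))] at hdet
            simp only [Finset.mem_univ, if_true] at hdet
            exact absurd hdet (by norm_num)
      | succ d IHd =>
        intro g hcols hzero
        by_cases hdn : n ≤ d
        · exact IHd g hcols (fun p hp hpk => absurd hp (by have := p.isLt; omega))
        have hdn' : d < n := lt_of_not_ge hdn
        set p0 : Fin n := ⟨d, hdn'⟩ with hp0
        have hp0val : (p0 : ℕ) = d := rfl
        by_cases hdk : d < n - m - 1
        · -- automatic zero from identity column p0
          apply IHd g hcols
          intro p hp hpk
          rcases eq_or_lt_of_le hp with heq | hlt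
          · have hpd : p = p0 := Fin.ext heq.symm
            rw [hpd]
            exact entry_zero_of_id_col _ (so_orth g) p0 k
              (fun r => hcols p0 r (by rw [hp0val]; exact hdk))
              (by intro e; rw [e, hkval] at hp0val; omega)
          · exact hzero p hlt hpk
        by_cases hdk2 : d = n - m - 1
        · -- p0 = k : nothing to clear
          apply IHd g hcols
          intro p hp hpk
          apply hzero p ?_ hpk
          rcases eq_or_lt_of_le hp with heq | hlt
          · exact absurd (Fin.ext (by rw [hkval]; omega) : p = k) hpk
          · exact hlt
        · -- rotation step in the (k, p0) plane
          have hkd : (k : ℕ) < d := by simp only [hk]; omega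
          have hkp0 : k ≠ p0 := by
            intro e; have := congrArg Fin.val e; simp [hk, hp0] at this; omega
          set A := (g : Matrix (Fin n) (Fin n) ℝ) with hA
          set a := A k k with ha
          set b := A p0 k with hb
          by_cases hab : a ^ 2 + b ^ 2 = 0
          · -- entry already zero
            apply IHd g hcols
            intro p hp hpk
            rcases eq_or_lt_of_le hp with heq | hlt
            · have hpd : p = p0 := Fin.ext heq.symm
              rw [hpd]
              show A p0 k = 0
              have hb0 : b ^ 2 = 0 := by nlinarith [sq_nonneg a, sq_nonneg b]
              have := (pow_eq_zero_iff two_ne_zero).mp hb0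
              rw [← hb]
              exact this
            · exact hzero p hlt hpk
          · have habpos : 0 < a ^ 2 + b ^ 2 :=
              lt_of_le_of_ne (by positivity) (Ne.symm hab)
            set r := Real.sqrt (a ^ 2 + b ^ 2) with hr
            have hrpos : 0 < r := Real.sqrt_pos.mpr habpos
            have hr2 : r ^ 2 = a ^ 2 + b ^ 2 := Real.sq_sqrt (le_of_lt habpos)
            set c := a / r with hc
            set s := -b / r with hs
            have hcs : c ^ 2 + s ^ 2 = 1 := by
              rw [hc, hs]
              field_simp
              linarith [hr2]
            have hGmem := giv_mem hkp0 hcs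
            set G : ↥(Matrix.specialOrthogonalGroup (Fin n) ℝ) := ⟨giv k p0 c s, hGmem⟩ with hG
            have hg'mat : ((G * g : _) : Matrix (Fin n) (Fin n) ℝ)
                = giv k p0 c s * A := rfl
            have hcols' : ∀ j p : Fin n, (j : ℕ) < n - m - 1 →
                ((G * g : _) : Matrix (Fin n) (Fin n) ℝ) p j
                  = (1 : Matrix (Fin n) (Fin n) ℝ) p j := by
              intro j p hj
              rw [hg'mat, giv_mul_apply hkp0]
              have hkj : k ≠ j := by intro e; rw [← e] at hj; simp [hk] at hj
              have hp0j : p0 ≠ j := by intro e; rw [← e] at hj; simp [hp0] at hj; omega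
              rw [hcols j k hj, hcols j p0 hj, Matrix.one_apply_ne hkj, Matrix.one_apply_ne hp0j]
              split_ifs with h1' h2'
              · rw [h1', Matrix.one_apply_ne hkj]; ring
              · rw [h2', Matrix.one_apply_ne hp0j]; ring
              · exact hcols j p hj
            have hzero' : ∀ p : Fin n, d ≤ (p : ℕ) → p ≠ k →
                ((G * g : _) : Matrix (Fin n) (Fin n) ℝ) p k = 0 := by
              intro p hp hpk
              rw [hg'mat, giv_mul_apply hkp0]
              split_ifs with h1' h2'
              · exact absurd h1' hpk
              · rw [← ha, ← hb, hc, hs]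
                field_simp
                ring
              · have hpd : (p : ℕ) ≠ d := by
                  intro e; exact h2' (Fin.ext e)
                exact hzero p (by omega) hpk
            have hg'' := IHd (G * g) hcols' hzero'
            have hGmem2 := giv_mem hkp0 (show c ^ 2 + (-s) ^ 2 = 1 by rw [neg_pow]; simpa using hcs)
            set Ginv : ↥(Matrix.specialOrthogonalGroup (Fin n) ℝ) :=
              ⟨giv k p0 c (-s), hGmem2⟩ with hGinv
            have hGG : Ginv * G = 1 := by
              apply Subtype.ext
              show giv k p0 c (-s) * giv k p0 c s = _
              rw [giv_mul_giv hkp0,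
                show c * c - -s * s = 1 by nlinarith [hcs],
                show c * s + -s * c = 0 by ring, giv_one]
              rfl
            have hgEg : g = Ginv * (G * g) := by rw [← mul_assoc, hGG, one_mul]
            rw [hgEg]
            exact mul_mem (Submonoid.subset_closure
              ⟨k, p0, c, -s, hkp0, by rw [neg_pow]; simpa using hcs, rfl⟩) hg''
    -- apply clearing with d = n (vacuous zero hypothesis)
    exact clear n g (fun j p hj => hg j p (by omega))
      (fun p hp hpk => absurd hp (by have := p.isLt; omega))

theorem all_mem_closure (g : ↥(Matrix.specialOrthogonalGroup (Fin n) ℝ)) :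
    g ∈ Submonoid.closure (gens n) :=
  mem_closure_of_cols n g (fun j p hj => absurd hj (by omega))


/-! ### The U(2) lemma -/

abbrev M2 := Matrix (Fin 2) (Fin 2) ℂ

lemma u2_lemma (U V g g' h h' : ↥(Matrix.unitaryGroup (Fin 2) ℂ))
    (hU2 : U * U = 1) (hg : g * g' = 1) (hh : h * h' = 1)
    (hV : V = g * U * g') (hUV : U * V = h * U * h') : U = 1 := by
  have hh2 : h' * h = 1 := by
    rw [← inv_eq_of_mul_eq_one_right hh, inv_mul_cancel]
  set u : M2 := ↑U with hu
  set v : M2 := ↑V with hv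
  have hu2 : u * u = 1 := by have := congrArg Subtype.val hU2; simpa using this
  have hdetu2 : u.det * u.det = 1 := by rw [← Matrix.det_mul, hu2, Matrix.det_one]
  have hvmat : v = (↑g : M2) * u * (↑g' : M2) := by have := congrArg Subtype.val hV; simpa using this
  have hgg : (↑g : M2) * (↑g' : M2) = 1 := by have := congrArg Subtype.val hg; simpa using this
  have hhh : (↑h : M2) * (↑h' : M2) = 1 := by have := congrArg Subtype.val hh; simpa using this
  have hhh2 : (↑h' : M2) * (↑h : M2) = 1 := by have := congrArg Subtype.val hh2; simpa using this
  have huvmat : u * v = (↑h : M2) * u * (↑h' : M2) := by have := congrArg Subtype.val hUV; simpa using this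
  have e1 : (↑g : M2).det * (↑g' : M2).det = 1 := by
    rw [← Matrix.det_mul, hgg, Matrix.det_one]
  have e2 : (↑h : M2).det * (↑h' : M2).det = 1 := by
    rw [← Matrix.det_mul, hhh, Matrix.det_one]
  have hdetv : v.det = u.det := by
    rw [hvmat, Matrix.det_mul, Matrix.det_mul]
    linear_combination u.det * e1
  have hdetuv : u.det * v.det = u.det := by
    rw [← Matrix.det_mul, huvmat, Matrix.det_mul, Matrix.det_mul]
    linear_combination u.det * e2
  have hdetu : u.det = 1 := by
    rw [hdetv] at hdetuv
    exact hdetuv.symm.trans hdetu2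
  have htruv : (u * v).trace = u.trace := by
    rw [huvmat, Matrix.trace_mul_comm, ← mul_assoc, hhh2, one_mul]
  -- entry equations
  have he : ∀ p q : Fin 2, (u * u) p q = (1 : M2) p q := fun p q => by rw [hu2]
  have e00 : u 0 0 * u 0 0 + u 0 1 * u 1 0 = 1 := by
    simpa [Matrix.mul_apply, Fin.sum_univ_two, Matrix.one_apply] using he 0 0
  have e01 : u 0 0 * u 0 1 + u 0 1 * u 1 1 = 0 := by
    simpa [Matrix.mul_apply, Fin.sum_univ_two, Matrix.one_apply] using he 0 1
  have e10 : u 1 0 * u 0 0 + u 1 1 * u 1 0 = 0 := by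
    simpa [Matrix.mul_apply, Fin.sum_univ_two, Matrix.one_apply] using he 1 0
  have e11 : u 1 0 * u 0 1 + u 1 1 * u 1 1 = 1 := by
    simpa [Matrix.mul_apply, Fin.sum_univ_two, Matrix.one_apply] using he 1 1
  have hdet : u 0 0 * u 1 1 - u 0 1 * u 1 0 = 1 := by
    rw [← Matrix.det_fin_two]; exact hdetu
  have ht : u 0 0 + u 1 1 ≠ 0 := by
    intro ht
    have h20 : (2 : ℂ) = 0 := by linear_combination (-1 : ℂ) * e00 - hdet + u 0 0 * ht
    norm_num at h20
  have hb : u 0 1 = 0 := by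
    have : u 0 1 * (u 0 0 + u 1 1) = 0 := by linear_combination e01
    rcases mul_eq_zero.mp this with h | h
    · exact h
    · exact absurd h ht
  have hc : u 1 0 = 0 := by
    have : u 1 0 * (u 0 0 + u 1 1) = 0 := by linear_combination e10
    rcases mul_eq_zero.mp this with h | h
    · exact h
    · exact absurd h ht
  have ha2 : u 0 0 * u 0 0 = 1 := by linear_combination e00 - u 1 0 * hb
  have had : u 0 0 * u 1 1 = 1 := by linear_combination hdet + u 1 0 * hb
  have ha0 : u 0 0 ≠ 0 := by
    intro h0; rw [h0] at ha2; simpa using ha2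
  have hd : u 1 1 = u 0 0 := by
    have hx : u 0 0 * (u 1 1 - u 0 0) = 0 := by linear_combination had - ha2
    rcases mul_eq_zero.mp hx with h | h
    · exact absurd h ha0
    · exact sub_eq_zero.mp h
  rcases mul_self_eq_one_iff.mp ha2 with ha | ha
  · -- u = 1
    apply Subtype.ext
    show u = (1 : M2)
    ext p q
    fin_cases p <;> fin_cases q <;> simp [hb, hc, ha, hd, Matrix.one_apply]
  · -- u = -1 : contradiction
    exfalso
    have hu1 : u = -(1 : M2) := by
      ext p q
      fin_cases p <;> fin_cases q <;> simp [hb, hc, ha, hd, Matrix.one_apply]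
    have hv1 : v = -(1 : M2) := by
      rw [hvmat, hu1]
      simp only [mul_neg, neg_mul, mul_one]
      rw [hgg]
    have huv1 : u * v = 1 := by rw [hu1, hv1]; simp
    rw [huv1] at htruv
    have htr1 : (1 : M2).trace = 2 := by simp [Matrix.trace_one]
    have htru : u.trace = -2 := by
      rw [Matrix.trace_fin_two, ha, hd, ha]; ring
    rw [htr1, htru] at htruv
    norm_num at htruv

/-! ### Final assembly -/

lemma exists_third {n : ℕ} (hn : 3 ≤ n) (i j : Fin n) : ∃ k : Fin n, k ≠ i ∧ k ≠ j := by
  by_contra hcon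
  push_neg at hcon
  have hsub : (Finset.univ : Finset (Fin n)) ⊆ {i, j} := by
    intro k _
    rcases eq_or_ne k i with h | h
    · simp [h]
    · simp [hcon k h]
  have hcard := Finset.card_le_card hsub
  have h2 : ({i, j} : Finset (Fin n)).card ≤ 2 :=
    (Finset.card_insert_le _ _).trans (by simp)
  rw [Finset.card_univ, Fintype.card_fin] at hcard
  omega

section Main

variable {n : ℕ} (φ : ↥(Matrix.specialOrthogonalGroup (Fin n) ℝ) →* ↥(Matrix.unitaryGroup (Fin 2) ℂ))

lemma phi_E_eq_one (hn : 3 ≤ n) {i j : Fin n} (hij : i ≠ j) :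
    φ ⟨giv i j (-1) 0, giv_mem hij (by norm_num)⟩ = 1 := by
  obtain ⟨k, hki, hkj⟩ := exists_third hn i j
  have hik : i ≠ k := hki.symm
  have hjk : j ≠ k := hkj.symm
  set a : ↥(Matrix.specialOrthogonalGroup (Fin n) ℝ) :=
    ⟨giv i j (-1) 0, giv_mem hij (by norm_num)⟩ with hadef
  set b : ↥(Matrix.specialOrthogonalGroup (Fin n) ℝ) :=
    ⟨giv k j (-1) 0, giv_mem (fun e => hkj e) (by norm_num)⟩ with hbdef
  set eik : ↥(Matrix.specialOrthogonalGroup (Fin n) ℝ) :=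
    ⟨giv i k (-1) 0, giv_mem hik (by norm_num)⟩ with heikdef
  set w : ↥(Matrix.specialOrthogonalGroup (Fin n) ℝ) :=
    ⟨giv i k 0 1, giv_mem hik (by norm_num)⟩ with hwdef
  set w' : ↥(Matrix.specialOrthogonalGroup (Fin n) ℝ) :=
    ⟨giv i k 0 (-1), giv_mem hik (by norm_num)⟩ with hw'def
  set z : ↥(Matrix.specialOrthogonalGroup (Fin n) ℝ) :=
    ⟨giv j k 0 1, giv_mem hjk (by norm_num)⟩ with hzdef
  set z' : ↥(Matrix.specialOrthogonalGroup (Fin n) ℝ) :=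
    ⟨giv j k 0 (-1), giv_mem hjk (by norm_num)⟩ with hz'def
  have haa : a * a = 1 := by
    apply Subtype.ext
    show giv i j (-1) 0 * giv i j (-1) 0 = _
    rw [giv_mul_giv hij, show (-1 : ℝ) * -1 - 0 * 0 = 1 by ring,
      show (-1 : ℝ) * 0 + 0 * -1 = 0 by ring, giv_one]
    rfl
  have hww : w * w' = 1 := by
    apply Subtype.ext
    show giv i k 0 1 * giv i k 0 (-1) = _
    rw [giv_mul_giv hik, show (0 : ℝ) * 0 - 1 * -1 = 1 by ring,
      show (0 : ℝ) * -1 + 1 * 0 = 0 by ring, giv_one]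
    rfl
  have hzz : z * z' = 1 := by
    apply Subtype.ext
    show giv j k 0 1 * giv j k 0 (-1) = _
    rw [giv_mul_giv hjk, show (0 : ℝ) * 0 - 1 * -1 = 1 by ring,
      show (0 : ℝ) * -1 + 1 * 0 = 0 by ring, giv_one]
    rfl
  have hwa : w * a = b * w := Subtype.ext (giv_swap_comm hij hik hjk)
  have hV : b = w * a * w' := by
    rw [hwa, mul_assoc, hww, mul_one]
  have hab : a * b = eik := Subtype.ext (E_mul_E hij hik hjk)
  have hza : z * a = eik * z := Subtype.ext (giv_swap_comm' hij hik hjk)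
  have hUV : a * b = z * a * z' := by
    rw [hza, mul_assoc, hzz, mul_one, hab]
  exact u2_lemma (φ a) (φ b) (φ w) (φ w') (φ z) (φ z')
    (by rw [← φ.map_mul, haa, φ.map_one])
    (by rw [← φ.map_mul, hww, φ.map_one])
    (by rw [← φ.map_mul, hzz, φ.map_one])
    (by rw [← φ.map_mul, ← φ.map_mul, ← hV])
    (by rw [← φ.map_mul, ← φ.map_mul, ← φ.map_mul, ← hUV])

lemma phi_gens_eq_one (hn : 3 ≤ n) (g : ↥(Matrix.specialOrthogonalGroup (Fin n) ℝ))
    (hgen : g ∈ gens n) : φ g = 1 := by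
  obtain ⟨i, j, c, s, hij, hcs, hmat⟩ := hgen
  obtain ⟨k, hki, hkj⟩ := exists_third hn i j
  have hik : i ≠ k := hki.symm
  have hjk : j ≠ k := hkj.symm
  obtain ⟨c', s', h1, hcc, hss⟩ := half_angle hcs
  have h1' : c' ^ 2 + (-s') ^ 2 = 1 := by rw [neg_pow]; simpa using h1
  set G1 : ↥(Matrix.specialOrthogonalGroup (Fin n) ℝ) :=
    ⟨giv i j c' s', giv_mem hij h1⟩ with hG1
  set G2 : ↥(Matrix.specialOrthogonalGroup (Fin n) ℝ) :=
    ⟨giv i j c' (-s'), giv_mem hij h1'⟩ with hG2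
  set E : ↥(Matrix.specialOrthogonalGroup (Fin n) ℝ) :=
    ⟨giv j k (-1) 0, giv_mem hjk (by norm_num)⟩ with hE
  have e1 : c' * c' - s' * s' = c := by rw [hcc]; ring
  have e2 : c' * s' + s' * c' = s := by rw [hss]; ring
  have hgeq : g = G1 * (E * (G2 * E)) := by
    apply Subtype.ext
    show (g : Matrix (Fin n) (Fin n) ℝ)
      = giv i j c' s' * (giv j k (-1) 0 * (giv i j c' (-s') * giv j k (-1) 0))
    rw [show giv j k (-1) 0 * (giv i j c' (-s') * giv j k (-1) 0)
        = (giv j k (-1) 0 * giv i j c' (-s')) * giv j k (-1) 0 from (mul_assoc _ _ _).symm,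
      E_comm_giv hij hik hjk c' (-s'), neg_neg, mul_assoc,
      giv_mul_giv hjk, show (-1 : ℝ) * -1 - 0 * 0 = 1 by ring,
      show (-1 : ℝ) * 0 + 0 * -1 = 0 by ring, giv_one, mul_one,
      giv_mul_giv hij, e1, e2, hmat]
  have hG1G2 : G1 * G2 = 1 := by
    apply Subtype.ext
    show giv i j c' s' * giv i j c' (-s') = _
    rw [giv_mul_giv hij, show c' * c' - s' * -s' = 1 by nlinarith [h1],
      show c' * -s' + s' * c' = 0 by ring, giv_one]
    rfl
  have hEone : φ E = 1 := phi_E_eq_one φ hn hjk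
  rw [hgeq, φ.map_mul, φ.map_mul, φ.map_mul, hEone, mul_one, one_mul, ← φ.map_mul, hG1G2, φ.map_one]

end Main

end SOU2

/-- Let `n ≥ 3`. Every continuous group homomorphism from `SO(n)`
(the group of `n × n` real matrices `A` with `AᵀA = 1` and `det A = 1`) to `U(2)`
(the group of `2 × 2` complex matrices `U` with `U*U = 1`) is trivial. -/
theorem triviality_of_continuous_hom_SO_n_to_U2 (n : ℕ) (hn : 3 ≤ n)
    (φ : ↥(Matrix.specialOrthogonalGroup (Fin n) ℝ) →* ↥(Matrix.unitaryGroup (Fin 2) ℂ))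
    (hφ : Continuous φ) :
    ∀ g, φ g = 1 := by
  intro g
  have hcl := SOU2.all_mem_closure g
  induction hcl using Submonoid.closure_induction with
  | mem x hx => exact SOU2.phi_gens_eq_one φ hn x hx
  | one => exact φ.map_one
  | mul x y hx hy ihx ihy => rw [φ.map_mul, ihx, ihy, mul_one]
end

section
/- Every continuous group homomorphism from SO(3) to SU(2) is trivial. -/
/-!
In `SU(2)` an involution `M` equals its adjugate `M⁻¹`, which forces `M = ±1`; so involutions
of `SU(2)` are central, and every homomorphism into `SU(2)` kills `(s * t) ^ 2` whenever
`s ^ 2 = t ^ 2 = 1`. In `SO(3)` the product of the half-turns about two horizontal axes meeting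
at angle `θ / 2` is the rotation by `θ` about the `z`-axis, so every such rotation is a square of
a product of two involutions. Rotations about the `x`-axis are conjugate to those about the
`z`-axis, and by the Euler angle decomposition these rotations generate `SO(3)`.
-/

open Matrix Real

section InvolutionProductSquares

variable {G H : Type*} [Group G] [Group H]

variable (G) in
def involutionProductSquares : Set G :=
  {g | ∃ s t : G, s ^ 2 = 1 ∧ t ^ 2 = 1 ∧ (s * t) ^ 2 = g}

theorem MonoidHom.map_eq_one_of_mem_involutionProductSquares (f : G →* H)
    (hH : ∀ x y : H, x ^ 2 = 1 → y ^ 2 = 1 → Commute x y) {g : G}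
    (hg : g ∈ involutionProductSquares G) : f g = 1 := by
  obtain ⟨s, t, hs, ht, rfl⟩ := hg
  have hfs : f s ^ 2 = 1 := by rw [← map_pow, hs, map_one]
  have hft : f t ^ 2 = 1 := by rw [← map_pow, ht, map_one]
  rw [map_pow, map_mul, (hH _ _ hfs hft).mul_pow, hfs, hft, one_mul]

theorem MonoidHom.eq_one_of_normalClosure_involutionProductSquares_eq_top (f : G →* H)
    (hH : ∀ x y : H, x ^ 2 = 1 → y ^ 2 = 1 → Commute x y)
    (hG : Subgroup.normalClosure (involutionProductSquares G) = ⊤) : f = 1 := by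
  have hker : Subgroup.normalClosure (involutionProductSquares G) ≤ f.ker :=
    Subgroup.normalClosure_le_normal fun _ hg ↦ f.map_eq_one_of_mem_involutionProductSquares hH hg
  ext g
  exact hker (hG ▸ Subgroup.mem_top g)

end InvolutionProductSquares

theorem Matrix.eq_one_or_eq_neg_one_of_sq_eq_one_of_det_eq_one {R : Type*} [CommRing R]
    [IsDomain R] [CharZero R] {M : Matrix (Fin 2) (Fin 2) R} (hM : M ^ 2 = 1) (hdet : M.det = 1) :
    M = 1 ∨ M = -1 := by
  have hadj : M.adjugate = M := calc
    M.adjugate = M ^ 2 * M.adjugate := by rw [hM, one_mul]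
    _ = M := by rw [sq, mul_assoc, mul_adjugate, hdet, one_smul, mul_one]
  rw [adjugate_fin_two] at hadj
  have h01 : M 0 1 = 0 := self_eq_neg.mp (by simpa using (congrFun (congrFun hadj 0) 1).symm)
  have h10 : M 1 0 = 0 := self_eq_neg.mp (by simpa using (congrFun (congrFun hadj 1) 0).symm)
  have h11 : M 1 1 = M 0 0 := by simpa using congrFun (congrFun hadj 0) 0
  have h00 : M 0 0 * M 0 0 = 1 := by simpa [det_fin_two, h01, h11] using hdet
  rcases mul_self_eq_one_iff.mp h00 with h | h
  · left; ext i j; fin_cases i <;> fin_cases j <;> simp [h, h01, h10, h11]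
  · right; ext i j; fin_cases i <;> fin_cases j <;> simp [h, h01, h10, h11]

theorem Matrix.specialUnitaryGroup.commute_of_sq_eq_one {R : Type*} [CommRing R] [StarRing R]
    [IsDomain R] [CharZero R] {x : specialUnitaryGroup (Fin 2) R} (hx : x ^ 2 = 1)
    (y : specialUnitaryGroup (Fin 2) R) : Commute x y := by
  have hx' : (x : Matrix (Fin 2) (Fin 2) R) ^ 2 = 1 := congrArg Subtype.val hx
  rcases eq_one_or_eq_neg_one_of_sq_eq_one_of_det_eq_one hx' x.prop.2 with h | h <;>
    exact Subtype.ext (by simp [h])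

theorem Matrix.specialOrthogonalGroup.coe_inv {n R : Type*} [Fintype n] [DecidableEq n]
    [CommRing R] (A : specialOrthogonalGroup n R) :
    ((A⁻¹ : specialOrthogonalGroup n R) : Matrix n n R) = (A : Matrix n n R)ᵀ :=
  rfl

theorem Real.exists_polar (x y : ℝ) :
    ∃ θ, √(x ^ 2 + y ^ 2) * cos θ = x ∧ √(x ^ 2 + y ^ 2) * sin θ = y := by
  have hnorm : ‖(⟨x, y⟩ : ℂ)‖ = √(x ^ 2 + y ^ 2) := Complex.norm_eq_sqrt_sq_add_sq _
  exact ⟨Complex.arg ⟨x, y⟩, hnorm ▸ Complex.norm_mul_cos_arg _,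
    hnorm ▸ Complex.norm_mul_sin_arg _⟩

theorem Real.exists_cos_sin_eq {x y : ℝ} (h : x ^ 2 + y ^ 2 = 1) :
    ∃ θ, cos θ = x ∧ sin θ = y := by
  simpa [h] using exists_polar x y

local notation "SO₃" => (Matrix.specialOrthogonalGroup (Fin 3) ℝ : Type)

namespace SO3

/-- The half-turn about the axis `(cos (a / 2), sin (a / 2), 0)`. -/
noncomputable def halfTurn (a : ℝ) : SO₃ :=
  ⟨!![cos a, sin a, 0; sin a, -cos a, 0; 0, 0, -1], by
    refine ⟨(mem_orthogonalGroup_iff' _ _).mpr ?_, ?_⟩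
    · ext i j
      fin_cases i <;> fin_cases j <;> simp [mul_apply, Fin.sum_univ_three] <;>
        nlinarith [sin_sq_add_cos_sq a]
    · simp [det_fin_three]
      nlinarith [sin_sq_add_cos_sq a]⟩

theorem halfTurn_inv (a : ℝ) : (halfTurn a)⁻¹ = halfTurn a := by
  ext i j
  fin_cases i <;> fin_cases j <;> simp [specialOrthogonalGroup.coe_inv, halfTurn]

theorem halfTurn_sq (a : ℝ) : halfTurn a ^ 2 = 1 := by
  rw [sq, ← mul_inv_cancel (halfTurn a), halfTurn_inv]

noncomputable def rotZ (θ : ℝ) : SO₃ := halfTurn θ * halfTurn 0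

theorem coe_rotZ (θ : ℝ) : (rotZ θ : Matrix (Fin 3) (Fin 3) ℝ) =
    !![cos θ, -sin θ, 0; sin θ, cos θ, 0; 0, 0, 1] := by
  ext i j
  fin_cases i <;> fin_cases j <;> simp [rotZ, halfTurn, mul_apply, Fin.sum_univ_three]

theorem rotZ_add (a b : ℝ) : rotZ (a + b) = rotZ a * rotZ b := by
  ext i j
  fin_cases i <;> fin_cases j <;>
    simp [coe_rotZ, mul_apply, Fin.sum_univ_three, cos_add, sin_add] <;> ring

theorem rotZ_mem_involutionProductSquares (θ : ℝ) : rotZ θ ∈ involutionProductSquares SO₃ :=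
  ⟨halfTurn (θ / 2), halfTurn 0, halfTurn_sq _, halfTurn_sq _, by
    rw [show halfTurn (θ / 2) * halfTurn 0 = rotZ (θ / 2) from rfl, sq, ← rotZ_add, add_halves]⟩

noncomputable def cyclicPerm : SO₃ :=
  ⟨!![0, 0, 1; 1, 0, 0; 0, 1, 0], by
    refine ⟨(mem_orthogonalGroup_iff' _ _).mpr ?_, ?_⟩
    · ext i j
      fin_cases i <;> fin_cases j <;> simp [mul_apply, Fin.sum_univ_three]
    · simp [det_fin_three]⟩

noncomputable def rotX (θ : ℝ) : SO₃ := cyclicPerm * rotZ θ * cyclicPerm⁻¹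

theorem coe_rotX (θ : ℝ) : (rotX θ : Matrix (Fin 3) (Fin 3) ℝ) =
    !![1, 0, 0; 0, cos θ, -sin θ; 0, sin θ, cos θ] := by
  ext i j
  fin_cases i <;> fin_cases j <;>
    simp [rotX, cyclicPerm, coe_rotZ, specialOrthogonalGroup.coe_inv, mul_apply,
      Fin.sum_univ_three]

theorem exists_rotZ_mul_rotX_mulVec_single_two {v : Fin 3 → ℝ}
    (hv : v 0 ^ 2 + v 1 ^ 2 + v 2 ^ 2 = 1) :
    ∃ α β, ((rotZ α * rotX β : SO₃) : Matrix (Fin 3) (Fin 3) ℝ) *ᵥ Pi.single 2 1 = v := by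
  obtain ⟨α, hcosα, hsinα⟩ := exists_polar (-v 1) (v 0)
  rw [neg_sq] at hcosα hsinα
  obtain ⟨β, hcosβ, hsinβ⟩ := exists_cos_sin_eq (x := v 2) (y := √(v 1 ^ 2 + v 0 ^ 2))
    (by rw [sq_sqrt (by positivity)]; linarith)
  refine ⟨α, β, ?_⟩
  ext i
  fin_cases i <;>
    simp [coe_rotZ, coe_rotX, mulVec, dotProduct, Fin.sum_univ_three, hsinβ, hcosβ] <;>
    linarith

theorem exists_eq_rotZ_of_mulVec_single_two (B : SO₃)
    (hB : (B : Matrix (Fin 3) (Fin 3) ℝ) *ᵥ Pi.single 2 1 = Pi.single 2 1) :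
    ∃ γ, B = rotZ γ := by
  obtain ⟨M, hM, hdet⟩ := B
  have hcol (i : Fin 3) : M i 2 = (Pi.single 2 1 : Fin 3 → ℝ) i := by
    simpa [mulVec_single_one] using congrFun hB i
  have h02 : M 0 2 = 0 := by simpa using hcol 0
  have h12 : M 1 2 = 0 := by simpa using hcol 1
  have h22 : M 2 2 = 1 := by simpa using hcol 2
  have horth (i j : Fin 3) : ∑ k, M k i * M k j = if i = j then 1 else 0 := by
    simpa [mul_apply, one_apply] using congrFun (congrFun hM.1 i) j
  have h20 : M 2 0 = 0 := by simpa [Fin.sum_univ_three, h02, h12, h22] using horth 0 2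
  have h21 : M 2 1 = 0 := by simpa [Fin.sum_univ_three, h02, h12, h22] using horth 1 2
  have h0 : M 0 0 ^ 2 + M 1 0 ^ 2 = 1 := by
    simpa [Fin.sum_univ_three, h20, sq] using horth 0 0
  have h1 : M 0 1 ^ 2 + M 1 1 ^ 2 = 1 := by
    simpa [Fin.sum_univ_three, h21, sq] using horth 1 1
  replace hdet : M 0 0 * M 1 1 - M 0 1 * M 1 0 = 1 := by
    simpa [det_fin_three, h02, h12, h22, h20, h21] using hdet
  -- unit columns with determinant `1`: the second is the first turned by a right angle
  have hsq : (M 1 1 - M 0 0) ^ 2 + (M 0 1 + M 1 0) ^ 2 = 0 := by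
    linear_combination h0 + h1 - 2 * hdet
  obtain ⟨h11, h01⟩ := (add_eq_zero_iff_of_nonneg (sq_nonneg _) (sq_nonneg _)).mp hsq
  simp only [pow_eq_zero_iff two_ne_zero, sub_eq_zero, add_eq_zero_iff_eq_neg] at h11 h01
  obtain ⟨γ, hcos, hsin⟩ := exists_cos_sin_eq h0
  refine ⟨γ, Subtype.ext ?_⟩
  rw [coe_rotZ]
  ext i j
  fin_cases i <;> fin_cases j <;> simp [h02, h12, h22, h20, h21, h11, h01, hcos, hsin]

theorem exists_eq_rotZ_mul_rotX_mul_rotZ (A : SO₃) : ∃ α β γ, A = rotZ α * rotX β * rotZ γ := by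
  set e₂ : Fin 3 → ℝ := Pi.single 2 1
  have hunit : ∑ k, (A : Matrix (Fin 3) (Fin 3) ℝ) k 2 ^ 2 = 1 := by
    simpa [mul_apply, sq] using congrFun (congrFun A.prop.1.1 2) 2
  obtain ⟨α, β, hαβ⟩ := exists_rotZ_mul_rotX_mulVec_single_two (v := (A : Matrix _ _ ℝ) *ᵥ e₂)
    (by simpa [e₂, mulVec_single_one, Fin.sum_univ_three] using hunit)
  obtain ⟨γ, hγ⟩ := exists_eq_rotZ_of_mulVec_single_two ((rotZ α * rotX β)⁻¹ * A) (by
    rw [Submonoid.coe_mul, ← mulVec_mulVec, ← hαβ, mulVec_mulVec, ← Submonoid.coe_mul,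
      inv_mul_cancel, Submonoid.coe_one, one_mulVec])
  exact ⟨α, β, γ, by rw [← hγ, mul_inv_cancel_left]⟩

theorem normalClosure_involutionProductSquares_eq_top :
    Subgroup.normalClosure (involutionProductSquares SO₃) = ⊤ := by
  have hrotZ (θ : ℝ) : rotZ θ ∈ Subgroup.normalClosure (involutionProductSquares SO₃) :=
    Subgroup.subset_normalClosure (rotZ_mem_involutionProductSquares θ)
  have hrotX (θ : ℝ) : rotX θ ∈ Subgroup.normalClosure (involutionProductSquares SO₃) :=
    Subgroup.normalClosure_normal.conj_mem _ (hrotZ θ) cyclicPerm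
  refine eq_top_iff.mpr fun A _ ↦ ?_
  obtain ⟨α, β, γ, rfl⟩ := exists_eq_rotZ_mul_rotX_mul_rotZ A
  exact mul_mem (mul_mem (hrotZ α) (hrotX β)) (hrotZ γ)

end SO3

theorem triviality_of_continuous_hom_SO3_to_SU2_general
    (φ : ↥(Matrix.specialOrthogonalGroup (Fin 3) ℝ) →* ↥(Matrix.specialUnitaryGroup (Fin 2) ℂ)) :
    ∀ g, φ g = 1 := by
  have hφ : φ = 1 := φ.eq_one_of_normalClosure_involutionProductSquares_eq_top
    (fun _ y hx _ ↦ specialUnitaryGroup.commute_of_sq_eq_one hx y)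
    SO3.normalClosure_involutionProductSquares_eq_top
  exact fun g ↦ DFunLike.congr_fun hφ g

/-- Every continuous group homomorphism from `SO(3)` to `SU(2)`
(the group of `2 × 2` complex matrices `U` with `U*U = 1` and `det U = 1`) is trivial. -/
theorem triviality_of_continuous_hom_SO3_to_SU2
    (φ : ↥(Matrix.specialOrthogonalGroup (Fin 3) ℝ) →* ↥(Matrix.specialUnitaryGroup (Fin 2) ℂ))
    (hφ : Continuous φ) :
    ∀ g, φ g = 1 :=
  triviality_of_continuous_hom_SO3_to_SU2_general φ
end

section
/- Let f : SU(2) × SU(2) → SU(2) be a continuous group homomorphism. Then f is trivial on at least one of the two factors: either f(g,1) = 1 for all g ∈ SU(2), or f(1,h) = 1 for all h ∈ SU(2). -/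
/-!
The images of the two factors commute. If the image of the first factor is not abelian, the
image of the second consists of matrices commuting with two non-commuting `2 × 2` matrices,
hence of scalars, so it is abelian. But `SU(2)` is perfect, so a homomorphism out of it with
abelian image is trivial. Perfectness: every `g ∈ SU(2)` is a square `s ^ 2` with `s ∈ SU(2)`,
and `s` is conjugate to `s⁻¹` by some `w`, whence `g = ⁅s, w⁆`.
-/

open Matrix Complex ComplexConjugate
open scoped commutatorElement

lemma exists_commutatorElement_eq_mul_self_of_isConj_inv {G : Type*} [Group G] {g : G}
    (h : IsConj g g⁻¹) : ∃ w, ⁅g, w⁆ = g * g := by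
  obtain ⟨w, hw⟩ := isConj_iff.1 h.symm
  exact ⟨w, by rw [commutatorElement_def, mul_assoc g, mul_assoc g, hw]⟩

lemma MonoidHom.eq_one_of_forall_commute {G H : Type*} [Group G] [Group H]
    (hG : ∀ g : G, ∃ a b : G, ⁅a, b⁆ = g) (φ : G →* H) (hφ : ∀ x y, Commute (φ x) (φ y)) (g : G) :
    φ g = 1 := by
  obtain ⟨a, b, rfl⟩ := hG g
  rw [map_commutatorElement, commutatorElement_eq_one_iff_commute]
  exact hφ a b

namespace Matrix

variable {R : Type*} [CommRing R]

-- Coordinates of `X` modulo scalar matrices.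
def sl2Coords (X : Matrix (Fin 2) (Fin 2) R) : Fin 3 → R := ![X 0 1, X 1 0, X 1 1 - X 0 0]

lemma commute_iff_cross_sl2Coords_eq_zero {X A : Matrix (Fin 2) (Fin 2) R} :
    Commute X A ↔ sl2Coords X ⨯₃ sl2Coords A = 0 := by
  have hcomm : X * A - A * X = !![(sl2Coords X ⨯₃ sl2Coords A) 2, -(sl2Coords X ⨯₃ sl2Coords A) 1;
      -(sl2Coords X ⨯₃ sl2Coords A) 0, -(sl2Coords X ⨯₃ sl2Coords A) 2] := by
    ext i j; fin_cases i <;> fin_cases j <;> simp [sl2Coords, cross_apply, mul_apply] <;> ring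
  rw [Commute, SemiconjBy, ← sub_eq_zero, hcomm]
  constructor
  · intro h
    ext i; fin_cases i
    · simpa using congrFun₂ h 1 0
    · simpa using congrFun₂ h 0 1
    · simpa using congrFun₂ h 0 0
  · intro h
    simp [h, ← Matrix.ext_iff, Fin.forall_fin_two]

lemma eq_smul_one_of_sl2Coords_eq_zero {X : Matrix (Fin 2) (Fin 2) R} (h : sl2Coords X = 0) :
    X = X 0 0 • 1 := by
  have h01 := congrFun h 0; have h10 := congrFun h 1; have h11 := congrFun h 2
  simp only [sl2Coords] at h01 h10 h11
  ext i j; fin_cases i <;> fin_cases j <;> simp_all [sub_eq_zero]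

lemma exists_eq_smul_one_of_commute_of_not_commute {K : Type*} [Field K]
    {X A B : Matrix (Fin 2) (Fin 2) K} (hA : Commute X A) (hB : Commute X B)
    (hAB : ¬Commute A B) : ∃ c : K, X = c • 1 := by
  by_contra! hX
  have hx : sl2Coords X ≠ 0 := fun h => hX _ (eq_smul_one_of_sl2Coords_eq_zero h)
  obtain ⟨c, hc⟩ : ∃ c : K, c • sl2Coords X = sl2Coords A := by
    by_contra! h
    rw [commute_iff_cross_sl2Coords_eq_zero, ← neg_eq_zero, cross_anticomm] at hA
    exact crossProduct_ne_zero_iff_linearIndependent.2 (linearIndependent_fin2.2 ⟨hx, h⟩) hA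
  rw [commute_iff_cross_sl2Coords_eq_zero] at hB hAB
  rw [← hc, map_smul, LinearMap.smul_apply, hB, smul_zero] at hAB
  exact hAB rfl

lemma mem_specialUnitaryGroup_fin_two_iff {U : Matrix (Fin 2) (Fin 2) ℂ} :
    U ∈ specialUnitaryGroup (Fin 2) ℂ ↔
      ∃ a b : ℂ, normSq a + normSq b = 1 ∧ U = !![a, b; -conj b, conj a] := by
  constructor
  · intro hU
    obtain ⟨hunit, hdet⟩ := mem_specialUnitaryGroup_iff.1 hU
    have hstar : star U = adjugate U := by
      rw [← inv_eq_left_inv (mem_unitaryGroup_iff'.1 hunit), inv_def, hdet]; simp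
    rw [adjugate_fin_two, star_eq_conjTranspose, ← Matrix.ext_iff] at hstar
    have h11 : U 1 1 = conj (U 0 0) := by simpa using (hstar 0 0).symm
    have h10 : U 1 0 = -conj (U 0 1) := by simpa using congrArg Neg.neg (hstar 1 0).symm
    refine ⟨U 0 0, U 0 1, ?_, ?_⟩
    · rw [det_fin_two, h11, h10] at hdet
      have : (normSq (U 0 0) : ℂ) + normSq (U 0 1) = 1 := by
        rw [← mul_conj, ← mul_conj]; linear_combination hdet
      exact_mod_cast this
    · rw [← h11, ← h10]; exact eta_fin_two U
  · rintro ⟨a, b, hab, rfl⟩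
    have hab' : a * conj a + b * conj b = 1 := by
      simp only [mul_conj]; exact_mod_cast hab
    refine mem_specialUnitaryGroup_iff.2 ⟨mem_unitaryGroup_iff.2 ?_, ?_⟩
    · ext i j; fin_cases i <;> fin_cases j <;> simp [mul_apply, Fin.sum_univ_two]
      · linear_combination hab'
      · ring
      · ring
      · linear_combination hab'
    · rw [det_fin_two_of]; linear_combination hab'

end Matrix

lemma Complex.exists_normSq_eq_one_mul_sq_conj_eq_neg (b : ℂ) :
    ∃ c : ℂ, normSq c = 1 ∧ c ^ 2 * conj b = -b := by
  by_cases hb : b = 0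
  · exact ⟨1, by simp [hb]⟩
  · refine ⟨I * b / ‖b‖, ?_, ?_⟩
    · simp [normSq_eq_norm_sq, hb]
    · have hn : (‖b‖ : ℂ) ≠ 0 := by simpa using hb
      field_simp
      rw [mul_assoc, mul_conj', I_sq]
      ring

lemma Matrix.specialUnitaryGroup.isSquare_fin_two (g : specialUnitaryGroup (Fin 2) ℂ) :
    IsSquare g := by
  obtain ⟨a, b, hab, hg⟩ := mem_specialUnitaryGroup_fin_two_iff.1 g.2
  have hre : a.re ^ 2 + a.im ^ 2 + normSq b = 1 := by rwa [normSq_apply, ← sq, ← sq] at hab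
  by_cases ha : a.re = -1
  · rw [ha] at hre
    have him : a.im ^ 2 = 0 := by nlinarith [normSq_nonneg b]
    have ha' : a = -1 := Complex.ext ha (by simpa using him)
    have hb : b = 0 := normSq_eq_zero.1 (by nlinarith [normSq_nonneg b])
    refine ⟨⟨_, mem_specialUnitaryGroup_fin_two_iff.2 ⟨I, 0, by simp, rfl⟩⟩, Subtype.ext ?_⟩
    rw [hg, ha', hb]
    simp
  · have hpos : 0 < 2 + 2 * a.re := by
      have : -1 ≤ a.re := by nlinarith [sq_nonneg a.im, normSq_nonneg b]
      linarith [lt_of_le_of_ne this (Ne.symm ha)]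
    -- The square root is `(g + 1) / r` with `r ^ 2 = tr g + 2`:
    -- by Cayley–Hamilton, `(g + 1) ^ 2 = (tr g + 2) • g`.
    set r : ℂ := ↑(Real.sqrt (2 + 2 * a.re))
    have hr : r ≠ 0 := by simp [r, Real.sqrt_eq_zero', not_le.2 hpos]
    have hr2 : r ^ 2 = a + conj a + 2 := by
      rw [← ofReal_pow, Real.sq_sqrt hpos.le, add_conj]; push_cast; ring
    have hrc : conj r = r := conj_ofReal _
    have hab' : a * conj a + b * conj b = 1 := by simp only [mul_conj]; exact_mod_cast hab
    refine ⟨⟨_, mem_specialUnitaryGroup_fin_two_iff.2 ⟨(a + 1) / r, b / r, ?_, rfl⟩⟩,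
      Subtype.ext ?_⟩
    · have : ((normSq ((a + 1) / r) + normSq (b / r) : ℝ) : ℂ) = 1 := by
        push_cast [← mul_conj, map_div₀, map_add, map_one, hrc]
        field_simp
        linear_combination hab' - hr2
      exact_mod_cast this
    · rw [hg]
      simp only [map_div₀, hrc]
      ext i j; fin_cases i <;> fin_cases j <;> simp <;> field_simp <;> rw [hr2]
      · linear_combination hab'
      · ring
      · ring
      · linear_combination hab'

lemma Matrix.specialUnitaryGroup.isConj_inv_fin_two (g : specialUnitaryGroup (Fin 2) ℂ) :
    IsConj g g⁻¹ := by
  obtain ⟨a, b, -, hg⟩ := mem_specialUnitaryGroup_fin_two_iff.1 g.2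
  obtain ⟨c, hc, hcb⟩ := exists_normSq_eq_one_mul_sq_conj_eq_neg b
  have hc' : c * conj c = 1 := by rw [mul_conj, hc, ofReal_one]
  -- Conjugating by `w = !![0, c; -conj c, 0]` replaces `b` by `c ^ 2 * conj b` and `a` by `conj a`.
  refine isConj_iff.2
    ⟨⟨_, mem_specialUnitaryGroup_fin_two_iff.2 ⟨0, c, by simpa using hc, rfl⟩⟩, Subtype.ext ?_⟩
  rw [← star_eq_inv, ← star_eq_inv]
  simp only [specialUnitaryGroup.coe_star, Submonoid.coe_mul, hg]
  ext i j; fin_cases i <;> fin_cases j <;> simp [mul_apply, Fin.sum_univ_two]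
  · linear_combination conj a * hc'
  · linear_combination hcb
  · have hcb' : conj c ^ 2 * b = -conj b := by simpa using congrArg conj hcb
    linear_combination -hcb'
  · linear_combination a * hc'

lemma Matrix.specialUnitaryGroup.exists_commutatorElement_eq_fin_two
    (g : specialUnitaryGroup (Fin 2) ℂ) : ∃ a b : specialUnitaryGroup (Fin 2) ℂ, ⁅a, b⁆ = g := by
  obtain ⟨s, rfl⟩ := isSquare_fin_two g
  obtain ⟨w, hw⟩ := exists_commutatorElement_eq_mul_self_of_isConj_inv (isConj_inv_fin_two s)
  exact ⟨s, w, hw⟩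

theorem continuous_hom_SU2_prod_SU2_trivial_on_a_factor_general
    (f : ↥(Matrix.specialUnitaryGroup (Fin 2) ℂ) × ↥(Matrix.specialUnitaryGroup (Fin 2) ℂ) →*
      ↥(Matrix.specialUnitaryGroup (Fin 2) ℂ)) :
    (∀ g, f (g, 1) = 1) ∨ (∀ h, f (1, h) = 1) := by
  have hperfect := specialUnitaryGroup.exists_commutatorElement_eq_fin_two
  let φ₁ := f.comp (MonoidHom.inl _ _)
  let φ₂ := f.comp (MonoidHom.inr _ _)
  have hcomm : ∀ g h, Commute (φ₁ g : Matrix (Fin 2) (Fin 2) ℂ) (φ₂ h) := fun g h =>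
    Submonoid.commute_coe_coe.2 ((MonoidHom.commute_inl_inr g h).map f)
  by_cases h₁ : ∀ x y, Commute (φ₁ x) (φ₁ y)
  · exact .inl (φ₁.eq_one_of_forall_commute hperfect h₁)
  obtain ⟨x, y, hxy⟩ : ∃ x y, ¬Commute (φ₁ x : Matrix (Fin 2) (Fin 2) ℂ) (φ₁ y) := by
    simpa using h₁
  have hscalar : ∀ h, ∃ c : ℂ, (φ₂ h : Matrix (Fin 2) (Fin 2) ℂ) = c • 1 := fun h =>
    exists_eq_smul_one_of_commute_of_not_commute (hcomm x h).symm (hcomm y h).symm hxy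
  refine .inr (φ₂.eq_one_of_forall_commute hperfect fun h h' => ?_)
  obtain ⟨c, hc⟩ := hscalar h
  obtain ⟨c', hc'⟩ := hscalar h'
  rw [← Submonoid.commute_coe_coe, hc, hc']
  exact ((Commute.refl 1).smul_left c).smul_right c'

/-- Let `f : SU(2) × SU(2) → SU(2)` be a continuous group homomorphism.
Then `f` is trivial on at least one of the two factors. -/
theorem continuous_hom_SU2_prod_SU2_trivial_on_a_factor
    (f : ↥(Matrix.specialUnitaryGroup (Fin 2) ℂ) × ↥(Matrix.specialUnitaryGroup (Fin 2) ℂ) →*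
      ↥(Matrix.specialUnitaryGroup (Fin 2) ℂ))
    (hf : Continuous f) :
    (∀ g, f (g, 1) = 1) ∨ (∀ h, f (1, h) = 1) :=
  continuous_hom_SU2_prod_SU2_trivial_on_a_factor_general f
end

section
/- Let f : SU(2) × SU(2) → SU(2) be a continuous group homomorphism that is not trivial. Then f factors through one of the two projections: there exists a continuous group homomorphism Φ : SU(2) → SU(2) such that either f(g,h) = Φ(g) for all (g,h), or f(g,h) = Φ(h) for all (g,h). -/
open Matrix ComplexConjugate

namespace SU2Stmt7

local notation "SU2" => Matrix.specialUnitaryGroup (Fin 2) ℂ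
local notation "M2" => Matrix (Fin 2) (Fin 2) ℂ

/-! ### Clean entry lemmas (avoid simp instance pollution) -/

lemma me00 (a b c d : ℂ) : !![a,b;c,d] 0 0 = a := rfl
lemma me01 (a b c d : ℂ) : !![a,b;c,d] 0 1 = b := rfl
lemma me10 (a b c d : ℂ) : !![a,b;c,d] 1 0 = c := rfl
lemma me11 (a b c d : ℂ) : !![a,b;c,d] 1 1 = d := rfl
lemma mstar (M : M2) (i j : Fin 2) : (star M) i j = conj (M j i) := rfl
lemma mneg (M : M2) (i j : Fin 2) : (-M) i j = -(M i j) := rfl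
lemma msmul (x : ℂ) (M : M2) (i j : Fin 2) : (x • M) i j = x * M i j := rfl
lemma madd (M N : M2) (i j : Fin 2) : (M + N) i j = M i j + N i j := rfl
lemma mmul (A B : M2) (i j : Fin 2) :
    (A * B) i j = A i 0 * B 0 j + A i 1 * B 1 j := by
  rw [Matrix.mul_apply, Fin.sum_univ_two]
lemma mone00 : (1 : M2) 0 0 = 1 := Matrix.one_apply_eq 0
lemma mone11 : (1 : M2) 1 1 = 1 := Matrix.one_apply_eq 1
lemma mone01 : (1 : M2) 0 1 = 0 := Matrix.one_apply_ne (by decide)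
lemma mone10 : (1 : M2) 1 0 = 0 := Matrix.one_apply_ne (by decide)

lemma cconj_conj (z : ℂ) : conj (conj z) = z := Complex.conj_conj z
lemma cconj_neg (z : ℂ) : conj (-z) = -conj z := map_neg _ _
lemma cconj_add (z w : ℂ) : conj (z + w) = conj z + conj w := map_add _ _ _
lemma cconj_mul (z w : ℂ) : conj (z * w) = conj z * conj w := map_mul _ _ _
lemma cconj_zero : conj (0 : ℂ) = 0 := map_zero _
lemma cconj_one : conj (1 : ℂ) = 1 := map_one _
lemma cconj_I : conj Complex.I = -Complex.I := Complex.conj_I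
lemma cconj_real (r : ℝ) : conj (r : ℂ) = (r : ℂ) := Complex.conj_ofReal r

lemma ext2 {A B : M2} (h00 : A 0 0 = B 0 0) (h01 : A 0 1 = B 0 1)
    (h10 : A 1 0 = B 1 0) (h11 : A 1 1 = B 1 1) : A = B := by
  rw [Matrix.eta_fin_two A, Matrix.eta_fin_two B, h00, h01, h10, h11]

/-! ### Basic SU2 facts -/

lemma star_mul_self' (g : ↥SU2) : star g.val * g.val = 1 := g.2.1.1
lemma mul_star_self' (g : ↥SU2) : g.val * star g.val = 1 := g.2.1.2
lemma det_val (g : ↥SU2) : g.val.det = 1 := g.2.2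

def sinv (g : ↥SU2) : ↥SU2 :=
  ⟨star g.val, by
    refine Matrix.mem_specialUnitaryGroup_iff.mpr ⟨Matrix.mem_unitaryGroup_iff.mpr ?_, ?_⟩
    · rw [star_star]; exact star_mul_self' g
    · rw [show (star g.val) = g.valᴴ from rfl, Matrix.det_conjTranspose, det_val, star_one]⟩

lemma sinv_val (g : ↥SU2) : (sinv g).val = star g.val := rfl
lemma sinv_mul (g : ↥SU2) : sinv g * g = 1 := Subtype.ext (star_mul_self' g)
lemma mul_sinv (g : ↥SU2) : g * sinv g = 1 := Subtype.ext (mul_star_self' g)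

lemma star_eq_adjugate (g : ↥SU2) : star g.val = g.val.adjugate := by
  have h1 : g.val * g.val.adjugate = 1 := by
    rw [Matrix.mul_adjugate, det_val, one_smul]
  calc star g.val = star g.val * (g.val * g.val.adjugate) := by rw [h1, mul_one]
    _ = (star g.val * g.val) * g.val.adjugate := by rw [mul_assoc]
    _ = g.val.adjugate := by rw [star_mul_self', one_mul]

lemma val_11 (g : ↥SU2) : g.val 1 1 = conj (g.val 0 0) := by
  have h := congrFun (congrFun (star_eq_adjugate g) 0) 0
  rw [Matrix.adjugate_fin_two, mstar, me00] at h
  exact h.symm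

lemma val_10 (g : ↥SU2) : g.val 1 0 = -conj (g.val 0 1) := by
  have h := congrFun (congrFun (star_eq_adjugate g) 0) 1
  rw [Matrix.adjugate_fin_two, mstar, me01] at h
  rw [← cconj_conj (g.val 1 0), h, cconj_neg]

lemma norm_val (g : ↥SU2) :
    g.val 0 0 * conj (g.val 0 0) + g.val 0 1 * conj (g.val 0 1) = 1 := by
  have hd := det_val g
  rw [Matrix.det_fin_two, val_10 g, val_11 g] at hd
  linear_combination hd

lemma eta_val (g : ↥SU2) :
    g.val = !![g.val 0 0, g.val 0 1; -conj (g.val 0 1), conj (g.val 0 0)] := by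
  refine ext2 ?_ ?_ ?_ ?_
  · rw [me00]
  · rw [me01]
  · rw [me10]; exact val_10 g
  · rw [me11]; exact val_11 g

lemma mk2_mem (a b : ℂ) (h : a * conj a + b * conj b = 1) :
    !![a, b; -conj b, conj a] ∈ SU2 := by
  refine Matrix.mem_specialUnitaryGroup_iff.mpr ⟨Matrix.mem_unitaryGroup_iff.mpr ?_, ?_⟩
  · refine ext2 ?_ ?_ ?_ ?_ <;>
      simp only [mmul, mstar, me00, me01, me10, me11, mone00, mone01, mone10, mone11,
        cconj_neg, cconj_conj] <;>
      first
        | ring1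
        | linear_combination h
  · rw [Matrix.det_fin_two, me00, me01, me10, me11]
    linear_combination h

def mk2 (a b : ℂ) (h : a * conj a + b * conj b = 1) : ↥SU2 :=
  ⟨!![a, b; -conj b, conj a], mk2_mem a b h⟩

lemma mk2_val (a b : ℂ) (h : a * conj a + b * conj b = 1) :
    (mk2 a b h).val = !![a, b; -conj b, conj a] := rfl


lemma exists_sq (g : ↥SU2) : ∃ s : ↥SU2, s * s = g := by
  set a := g.val 0 0 with ha'
  set b := g.val 0 1 with hb'
  have hn : a * conj a + b * conj b = 1 := norm_val g
  have hg : g.val = !![a, b; -conj b, conj a] := eta_val g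
  have h1 : a * conj a = (Complex.normSq a : ℂ) := Complex.mul_conj a
  have h2 : b * conj b = (Complex.normSq b : ℂ) := Complex.mul_conj b
  have hnR : Complex.normSq a + Complex.normSq b = 1 := by
    have h3 : ((Complex.normSq a + Complex.normSq b : ℝ) : ℂ) = ((1:ℝ) : ℂ) := by
      push_cast
      rw [← h1, ← h2, hn]
    exact_mod_cast h3
  rw [Complex.normSq_apply, Complex.normSq_apply] at hnR
  by_cases hre : a.re = -1
  · -- here a = -1 and b = 0
    have him : a.im = 0 := by nlinarith [sq_nonneg a.im, sq_nonneg b.re, sq_nonneg b.im]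
    have hbre : b.re = 0 := by nlinarith [sq_nonneg a.im, sq_nonneg b.re, sq_nonneg b.im]
    have hbim : b.im = 0 := by nlinarith [sq_nonneg a.im, sq_nonneg b.re, sq_nonneg b.im]
    have ha1 : a = -1 := by
      apply Complex.ext
      · rw [hre]; norm_num
      · rw [him]; norm_num
    have hb0 : b = 0 := by
      apply Complex.ext
      · rw [hbre]; norm_num
      · rw [hbim]; norm_num
    have hI : Complex.I * conj Complex.I + (0:ℂ) * conj (0:ℂ) = 1 := by
      rw [cconj_I, cconj_zero]
      linear_combination -Complex.I_mul_I
    refine ⟨mk2 Complex.I 0 hI, Subtype.ext ?_⟩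
    show (mk2 Complex.I 0 hI).val * (mk2 Complex.I 0 hI).val = g.val
    rw [mk2_val, hg, ha1, hb0]
    refine ext2 ?_ ?_ ?_ ?_ <;>
      simp only [mmul, me00, me01, me10, me11, cconj_I, cconj_zero, cconj_neg, cconj_one] <;>
      first
        | ring1
        | linear_combination Complex.I_mul_I
  · have hare : -1 ≤ a.re := by
      nlinarith [sq_nonneg (a.re + 1), sq_nonneg a.im, sq_nonneg b.re, sq_nonneg b.im]
    have hpos : 0 < 2 * a.re + 2 := by
      rcases lt_or_eq_of_le hare with h | h
      · linarith
      · exact absurd h.symm hre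
    set r := Real.sqrt (2 * a.re + 2) with hrdef
    have hr2 : r * r = 2 * a.re + 2 := Real.mul_self_sqrt hpos.le
    have hrpos : 0 < r := Real.sqrt_pos.mpr hpos
    have hr0 : (r : ℂ) ≠ 0 := by exact_mod_cast hrpos.ne'
    have hrc : (r : ℂ) * (r : ℂ) = 2 * (a.re : ℂ) + 2 := by exact_mod_cast hr2
    have hadd : a + conj a = 2 * (a.re : ℂ) := by
      have := Complex.add_conj a
      push_cast at this
      exact this
    set u : ℂ := ((r : ℂ))⁻¹ with hudef
    have hu : conj u = u := by rw [hudef, map_inv₀, cconj_real]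
    have H3 : u * u * (2 * (a.re : ℂ) + 2) = 1 := by
      rw [hudef, ← hrc]
      field_simp
    have hsc : conj ((a + 1) * u) = (conj a + 1) * u := by
      rw [cconj_mul, cconj_add, cconj_one, hu]
    have hsd : conj (b * u) = conj b * u := by
      rw [cconj_mul, hu]
    have hcd : (a + 1) * u * conj ((a + 1) * u) + b * u * conj (b * u) = 1 := by
      rw [hsc, hsd]
      linear_combination H3 + u * u * hadd + u * u * hn
    refine ⟨mk2 _ _ hcd, Subtype.ext ?_⟩
    show (mk2 _ _ hcd).val * (mk2 _ _ hcd).val = g.val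
    rw [mk2_val, hg]
    refine ext2 ?_ ?_ ?_ ?_ <;>
      simp only [mmul, me00, me01, me10, me11, hsc, hsd, cconj_neg, cconj_conj] <;>
      first
        | linear_combination a * H3 + a * u * u * hadd - u * u * hn
        | linear_combination b * H3 + b * u * u * hadd
        | linear_combination (-conj b) * H3 - (conj b) * u * u * hadd
        | linear_combination (conj a) * H3 + (conj a) * u * u * hadd - u * u * hn

lemma exists_conj_inv (s : ↥SU2) : ∃ v : ↥SU2, v * s = sinv s * v := by
  set a := s.val 0 0 with ha'
  set b := s.val 0 1 with hb'
  have hg : s.val = !![a, b; -conj b, conj a] := eta_val s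
  set w := a.re; set x := a.im; set y := b.re; set z := b.im
  obtain ⟨γ, p, q, hortho, hnorm1⟩ :
      ∃ γ p q : ℝ, γ * x + p * y + q * z = 0 ∧ γ ^ 2 + p ^ 2 + q ^ 2 = 1 := by
    by_cases hxy : x = 0 ∧ y = 0
    · exact ⟨1, 0, 0, by rw [hxy.1, hxy.2]; ring, by norm_num⟩
    · have hpos : 0 < x ^ 2 + y ^ 2 := by
        rcases not_and_or.mp hxy with h | h
        · have : x ^ 2 > 0 := by positivity
          nlinarith [sq_nonneg y]
        · have : y ^ 2 > 0 := by positivity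
          nlinarith [sq_nonneg x]
      set n := Real.sqrt (x ^ 2 + y ^ 2) with hndef
      have hn2 : n * n = x ^ 2 + y ^ 2 := Real.mul_self_sqrt hpos.le
      have hnpos : 0 < n := Real.sqrt_pos.mpr hpos
      have hn0 : n ≠ 0 := hnpos.ne'
      refine ⟨y / n, -x / n, 0, by field_simp; ring, ?_⟩
      field_simp
      first
        | linear_combination hn2
        | linear_combination -hn2
        | linear_combination 2 * hn2
        | linear_combination (-2) * hn2
  have hI2 : Complex.I * Complex.I = -1 := Complex.I_mul_I
  have hw : a = (w : ℂ) + (x : ℂ) * Complex.I := (Complex.re_add_im a).symm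
  have hb : b = (y : ℂ) + (z : ℂ) * Complex.I := (Complex.re_add_im b).symm
  have horthoC : (γ : ℂ) * x + p * y + q * z = 0 := by exact_mod_cast hortho
  have hnormC : (γ : ℂ) ^ 2 + p ^ 2 + q ^ 2 = 1 := by exact_mod_cast hnorm1
  have hcd : ((γ : ℂ) * Complex.I) * conj ((γ : ℂ) * Complex.I)
      + ((p : ℂ) + (q : ℂ) * Complex.I) * conj ((p : ℂ) + (q : ℂ) * Complex.I) = 1 := by
    simp only [cconj_mul, cconj_add, cconj_real, cconj_I]
    first
      | linear_combination (-((γ:ℂ) ^ 2 + (q:ℂ) ^ 2)) * hI2 + hnormC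
      | linear_combination (((γ:ℂ) ^ 2 + (q:ℂ) ^ 2)) * hI2 + hnormC
  refine ⟨mk2 _ _ hcd, Subtype.ext ?_⟩
  show (mk2 _ _ hcd).val * s.val = star s.val * (mk2 _ _ hcd).val
  rw [mk2_val, hg]
  refine ext2 ?_ ?_ ?_ ?_ <;>
    simp only [mmul, mstar, me00, me01, me10, me11, hw, hb, cconj_mul, cconj_add,
      cconj_real, cconj_I, cconj_neg, cconj_one, cconj_zero] <;>
    first
      | ring1
      | linear_combination (2 * (γ:ℂ) * (x:ℂ)) * hI2 - 2 * horthoC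
      | linear_combination (-(2 * (γ:ℂ) * (x:ℂ))) * hI2 - 2 * horthoC
      | linear_combination (2 * (γ:ℂ) * (x:ℂ)) * hI2 + 2 * horthoC
      | linear_combination (-(2 * (γ:ℂ) * (x:ℂ))) * hI2 + 2 * horthoC
      | linear_combination (2 * (γ:ℂ) * (x:ℂ) + 2 * (q:ℂ) * (z:ℂ)) * hI2 - 2 * horthoC

lemma comm_span {z a : M2}
    (hz : z 0 1 ≠ 0 ∨ z 1 0 ≠ 0 ∨ z 0 0 ≠ z 1 1)
    (h : a * z = z * a) : ∃ α β : ℂ, a = α • (1 : M2) + β • z := by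
  have e : ∀ i j, a i 0 * z 0 j + a i 1 * z 1 j = z i 0 * a 0 j + z i 1 * a 1 j := by
    intro i j
    rw [← mmul, ← mmul, h]
  have e00 := e 0 0
  have e01 := e 0 1
  have e10 := e 1 0
  have e11 := e 1 1
  rcases hz with h01 | hz
  · refine ⟨a 0 0 - (a 0 1 / z 0 1) * z 0 0, a 0 1 / z 0 1, ?_⟩
    refine ext2 ?_ ?_ ?_ ?_ <;>
      simp only [madd, msmul, mone00, mone01, mone10, mone11] <;>
      field_simp <;>
      first
        | ring1
        | linear_combination e00
        | linear_combination -e00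
        | linear_combination e01
        | linear_combination -e01
  · rcases hz with h10 | hne
    · by_cases h01 : z 0 1 = 0
      · have ha01 : a 0 1 = 0 := by
          have h5 : z 1 0 * a 0 1 = 0 := by
            rw [h01] at e11
            first
              | linear_combination e11
              | linear_combination -e11
          rcases mul_eq_zero.mp h5 with h6 | h6
          · exact absurd h6 h10
          · exact h6
        refine ⟨a 0 0 - (a 1 0 / z 1 0) * z 0 0, a 1 0 / z 1 0, ?_⟩
        refine ext2 ?_ ?_ ?_ ?_ <;>
          simp only [madd, msmul, mone00, mone01, mone10, mone11] <;>
          (try simp only [h01, ha01]) <;>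
          field_simp <;>
          first
            | ring1
            | linear_combination e10
            | linear_combination -e10
            | linear_combination e00
            | linear_combination -e00
      · refine ⟨a 0 0 - (a 0 1 / z 0 1) * z 0 0, a 0 1 / z 0 1, ?_⟩
        refine ext2 ?_ ?_ ?_ ?_ <;>
          simp only [madd, msmul, mone00, mone01, mone10, mone11] <;>
          field_simp <;>
          first
            | ring1
            | linear_combination e00
            | linear_combination -e00
            | linear_combination e01
            | linear_combination -e01
    · have hsub : z 0 0 - z 1 1 ≠ 0 := sub_ne_zero.mpr hne
      by_cases h01 : z 0 1 = 0
      · by_cases h10 : z 1 0 = 0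
        · have ha01 : a 0 1 = 0 := by
            have h5 : a 0 1 * (z 1 1 - z 0 0) = 0 := by
              rw [h01] at e01
              first
                | linear_combination e01
                | linear_combination -e01
            rcases mul_eq_zero.mp h5 with h6 | h6
            · exact h6
            · exfalso; apply hsub; linear_combination -h6
          have ha10 : a 1 0 = 0 := by
            have h5 : a 1 0 * (z 0 0 - z 1 1) = 0 := by
              rw [h10] at e10
              first
                | linear_combination e10
                | linear_combination -e10
            rcases mul_eq_zero.mp h5 with h6 | h6
            · exact h6
            · exact absurd h6 hsub
          refine ⟨a 0 0 - ((a 0 0 - a 1 1) / (z 0 0 - z 1 1)) * z 0 0,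
            (a 0 0 - a 1 1) / (z 0 0 - z 1 1), ?_⟩
          refine ext2 ?_ ?_ ?_ ?_ <;>
            simp only [madd, msmul, mone00, mone01, mone10, mone11] <;>
            (try simp only [h01, h10, ha01, ha10]) <;>
            field_simp <;>
            first
              | ring1
              | linear_combination e01
              | linear_combination -e01
              | linear_combination e10
              | linear_combination -e10
        · refine ⟨a 0 0 - (a 1 0 / z 1 0) * z 0 0, a 1 0 / z 1 0, ?_⟩
          have ha01 : a 0 1 = 0 := by
            have h5 : z 1 0 * a 0 1 = 0 := by
              rw [h01] at e11
              first
                | linear_combination e11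
                | linear_combination -e11
            rcases mul_eq_zero.mp h5 with h6 | h6
            · exact absurd h6 h10
            · exact h6
          refine ext2 ?_ ?_ ?_ ?_ <;>
            simp only [madd, msmul, mone00, mone01, mone10, mone11] <;>
            (try simp only [h01, ha01]) <;>
            field_simp <;>
            first
              | ring1
              | linear_combination e10
              | linear_combination -e10
              | linear_combination e00
              | linear_combination -e00
      · refine ⟨a 0 0 - (a 0 1 / z 0 1) * z 0 0, a 0 1 / z 0 1, ?_⟩
        refine ext2 ?_ ?_ ?_ ?_ <;>
          simp only [madd, msmul, mone00, mone01, mone10, mone11] <;>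
          field_simp <;>
          first
            | ring1
            | linear_combination e00
            | linear_combination -e00
            | linear_combination e01
            | linear_combination -e01

lemma centralizer_abelian {z a b : M2}
    (hz : z 0 1 ≠ 0 ∨ z 1 0 ≠ 0 ∨ z 0 0 ≠ z 1 1)
    (ha : a * z = z * a) (hb : b * z = z * b) : a * b = b * a := by
  obtain ⟨α, β, rfl⟩ := comm_span hz ha
  obtain ⟨γ, δ, rfl⟩ := comm_span hz hb
  simp only [add_mul, mul_add, smul_mul_assoc, mul_smul_comm, one_mul, mul_one, smul_smul]
  module

lemma nonscalar_of_ne {z : ↥SU2} (h1 : z.val ≠ 1) (hm1 : z.val ≠ -1) :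
    z.val 0 1 ≠ 0 ∨ z.val 1 0 ≠ 0 ∨ z.val 0 0 ≠ z.val 1 1 := by
  by_contra hc
  push_neg at hc
  obtain ⟨h01, h10, hdiag⟩ := hc
  have hdet := det_val z
  rw [Matrix.det_fin_two, h01, h10, ← hdiag] at hdet
  have hsq : (z.val 0 0 - 1) * (z.val 0 0 + 1) = 0 := by linear_combination hdet
  rcases mul_eq_zero.mp hsq with h | h
  · apply h1
    have hz00 : z.val 0 0 = 1 := by linear_combination h
    refine ext2 ?_ ?_ ?_ ?_
    · rw [hz00, mone00]
    · rw [h01, mone01]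
    · rw [h10, mone10]
    · rw [← hdiag, hz00, mone11]
  · apply hm1
    have hz00 : z.val 0 0 = -1 := by linear_combination h
    refine ext2 ?_ ?_ ?_ ?_
    · rw [hz00, mneg, mone00]
    · rw [h01, mneg, mone01]; ring
    · rw [h10, mneg, mone10]; ring
    · rw [← hdiag, hz00, mneg, mone11]

lemma trivial_of_central (φ : ↥SU2 →* ↥SU2) (z : ↥SU2)
    (h1 : z.val ≠ 1) (hm1 : z.val ≠ -1)
    (hc : ∀ g : ↥SU2, (φ g).val * z.val = z.val * (φ g).val) :
    ∀ g : ↥SU2, φ g = 1 := by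
  have hns := nonscalar_of_ne h1 hm1
  have habel : ∀ g g' : ↥SU2, φ g * φ g' = φ g' * φ g := by
    intro g g'
    exact Subtype.ext (centralizer_abelian hns (hc g) (hc g'))
  have hinv : ∀ s : ↥SU2, φ (sinv s) = φ s := by
    intro s
    obtain ⟨v, hv⟩ := exists_conj_inv s
    have h2 : φ v * φ s = φ (sinv s) * φ v := by
      rw [← _root_.map_mul, ← _root_.map_mul, hv]
    calc φ (sinv s) = φ (sinv s) * (φ v * φ (sinv v)) := by
          rw [← _root_.map_mul, mul_sinv, _root_.map_one, mul_one]
      _ = (φ (sinv s) * φ v) * φ (sinv v) := by rw [mul_assoc]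
      _ = (φ v * φ s) * φ (sinv v) := by rw [h2]
      _ = (φ s * φ v) * φ (sinv v) := by rw [habel]
      _ = φ s * (φ v * φ (sinv v)) := by rw [mul_assoc]
      _ = φ s := by rw [← _root_.map_mul, mul_sinv, _root_.map_one, mul_one]
  have hsq1 : ∀ s : ↥SU2, φ s * φ s = 1 := by
    intro s
    calc φ s * φ s = φ s * φ (sinv s) := by rw [hinv]
      _ = φ (s * sinv s) := by rw [_root_.map_mul]
      _ = 1 := by rw [mul_sinv, _root_.map_one]
  intro g
  obtain ⟨s, hs⟩ := exists_sq g
  rw [← hs, _root_.map_mul, hsq1]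

end SU2Stmt7

open SU2Stmt7 in
/-- Let `f : SU(2) × SU(2) → SU(2)` be a continuous group homomorphism that is
not trivial. Then `f` factors through one of the two projections: there exists a continuous
group homomorphism `Φ : SU(2) → SU(2)` such that either `f (g, h) = Φ g` for all `(g, h)`, or
`f (g, h) = Φ h` for all `(g, h)`. -/
theorem nontrivial_continuous_hom_SU2_prod_SU2_factors
    (f : ↥(Matrix.specialUnitaryGroup (Fin 2) ℂ) × ↥(Matrix.specialUnitaryGroup (Fin 2) ℂ) →*
      ↥(Matrix.specialUnitaryGroup (Fin 2) ℂ))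
    (hf : Continuous f) (hnt : ¬ ∀ x, f x = 1) :
    ∃ Φ : ↥(Matrix.specialUnitaryGroup (Fin 2) ℂ) →* ↥(Matrix.specialUnitaryGroup (Fin 2) ℂ),
      Continuous Φ ∧ ((∀ g h, f (g, h) = Φ g) ∨ (∀ g h, f (g, h) = Φ h)) := by
  classical
  set f1 := f.comp (MonoidHom.inl _ _) with hf1def
  set f2 := f.comp (MonoidHom.inr _ _) with hf2def
  have hsplit : ∀ g h, f (g, h) = f1 g * f2 h := by
    intro g h
    have heq : (g, h) = ((g, 1) : _ × _) * ((1, h) : _ × _) := by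
      rw [Prod.mk_mul_mk, mul_one, one_mul]
    rw [heq, _root_.map_mul]
    rfl
  have hcomm : ∀ g h, f1 g * f2 h = f2 h * f1 g := by
    intro g h
    have heq : ((g, 1) : _ × _) * ((1, h) : _ × _)
        = ((1, h) : _ × _) * ((g, 1) : _ × _) := by
      rw [Prod.mk_mul_mk, Prod.mk_mul_mk, mul_one, one_mul, mul_one, one_mul]
    have := congrArg f heq
    rw [_root_.map_mul, _root_.map_mul] at this
    exact this
  by_cases htriv : ∀ g, f1 g = 1
  · refine ⟨f2, ?_, Or.inr ?_⟩
    · exact hf.comp (continuous_const.prodMk continuous_id)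
    · intro g h
      rw [hsplit g h, htriv g, one_mul]
  · push_neg at htriv
    obtain ⟨g0, hg0⟩ := htriv
    have hpm : ∀ h, (f2 h).val = 1 ∨ (f2 h).val = -1 := by
      intro h
      by_contra hcon
      push_neg at hcon
      refine hg0 (trivial_of_central f1 (f2 h) hcon.1 hcon.2 (fun g => ?_) g0)
      exact congrArg Subtype.val (hcomm g h)
    have hf2 : ∀ h, f2 h = 1 := by
      intro h
      obtain ⟨s, hs⟩ := exists_sq h
      have hss : f2 s * f2 s = 1 := by
        apply Subtype.ext
        show (f2 s).val * (f2 s).val = (1 : Matrix (Fin 2) (Fin 2) ℂ)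
        rcases hpm s with h1 | h1 <;> rw [h1]
        · rw [one_mul]
        · rw [neg_mul_neg, one_mul]
      rw [← hs, _root_.map_mul, hss]
    refine ⟨f1, ?_, Or.inl ?_⟩
    · exact hf.comp (continuous_id.prodMk continuous_const)
    · intro g h
      rw [hsplit g h, hf2 h, mul_one]
end

section
/- Let G be a group, H a real Hilbert space, and ρ a topologically irreducible representation of G on H by continuous linear automorphisms. Let W ⊆ H × H be a closed, complex-linear, G-invariant subspace of the complexification of H which is nonzero and proper. Then the restrictions to W of the real-part map Re(x,y) = x and of the imaginary-part map Im(x,y) = y are injective. -/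
/-- Let `G` be a group, `H` a real Hilbert space, `ρ` a topologically
irreducible representation of `G` on `H` by continuous linear automorphisms. The
complexification of `H` is modeled as `H × H` (the pair `(x, y)` standing for `x + i y`),
with multiplication by `i` given by `(x, y) ↦ (-y, x)` and with `ρ` acting diagonally.
If `W ⊆ H × H` is a closed, complex-linear (i.e. stable under multiplication by `i`),
`G`-invariant subspace which is nonzero and proper, then the restrictions to `W` of the
real-part map `(x, y) ↦ x` and of the imaginary-part map `(x, y) ↦ y` are injective. -/
theorem re_im_injOn_of_invariant_subspace_of_complexification
    {G : Type*} [Group G]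
    {H : Type*} [NormedAddCommGroup H] [InnerProductSpace ℝ H] [CompleteSpace H]
    (ρ : G →* (H ≃L[ℝ] H))
    (hirr : ∀ V : Submodule ℝ H, IsClosed (V : Set H) →
      (∀ g : G, ∀ v ∈ V, ρ g v ∈ V) → V = ⊥ ∨ V = ⊤)
    (W : Submodule ℝ (H × H))
    (hclosed : IsClosed (W : Set (H × H)))
    (hcomplex : ∀ p ∈ W, ((-p.2, p.1) : H × H) ∈ W)
    (hinv : ∀ g : G, ∀ p ∈ W, ((ρ g p.1, ρ g p.2) : H × H) ∈ W)
    (hne_bot : W ≠ ⊥) (hne_top : W ≠ ⊤) :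
    Set.InjOn (fun p : H × H => p.1) (W : Set (H × H)) ∧
      Set.InjOn (fun p : H × H => p.2) (W : Set (H × H)) := by
  set V : Submodule ℝ H := W.comap (LinearMap.inr ℝ H H) with hV
  have hVclosed : IsClosed (V : Set H) := by
    have hc : Continuous fun y : H => ((0, y) : H × H) :=
      continuous_const.prodMk continuous_id
    exact hclosed.preimage hc
  have hVinv : ∀ g : G, ∀ v ∈ V, ρ g v ∈ V := by
    intro g v hv
    have := hinv g (0, v) hv
    simpa [hV] using this
  have hker : ∀ y : H, ((0, y) : H × H) ∈ W → y = 0 := by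
    intro y hy
    rcases hirr V hVclosed hVinv with h | h
    · have hy' : y ∈ V := hy
      rw [h] at hy'
      simpa using hy'
    · exfalso
      apply hne_top
      ext p
      simp only [Submodule.mem_top, iff_true]
      have h1 : ((0, p.2) : H × H) ∈ W := by
        have : p.2 ∈ V := h ▸ Submodule.mem_top
        exact this
      have h2 : ((0, p.1) : H × H) ∈ W := by
        have : p.1 ∈ V := h ▸ Submodule.mem_top
        exact this
      have h3 : ((-p.1, 0) : H × H) ∈ W := by simpa using hcomplex _ h2
      have h4 : ((p.1, 0) : H × H) ∈ W := by
        have := W.neg_mem h3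
        simpa using this
      have := W.add_mem h4 h1
      simpa using this
  have hker2 : ∀ x : H, ((x, 0) : H × H) ∈ W → x = 0 := by
    intro x hx
    exact hker x (by simpa using hcomplex _ hx)
  constructor
  · intro p hp q hq hpq
    have hsub : p - q ∈ W := W.sub_mem hp hq
    have h1 : p.1 - q.1 = 0 := sub_eq_zero_of_eq hpq
    have hsub' : ((0, p.2 - q.2) : H × H) ∈ W := by
      have : ((p.1 - q.1, p.2 - q.2) : H × H) ∈ W := hsub
      rwa [h1] at this
    have h2 : p.2 - q.2 = 0 := hker _ hsub'
    exact Prod.ext (sub_eq_zero.mp h1) (sub_eq_zero.mp h2)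
  · intro p hp q hq hpq
    have hsub : p - q ∈ W := W.sub_mem hp hq
    have h2 : p.2 - q.2 = 0 := sub_eq_zero_of_eq hpq
    have hsub' : ((p.1 - q.1, 0) : H × H) ∈ W := by
      have : ((p.1 - q.1, p.2 - q.2) : H × H) ∈ W := hsub
      rwa [h2] at this
    have h1 : p.1 - q.1 = 0 := hker2 _ hsub'
    exact Prod.ext (sub_eq_zero.mp h1) (sub_eq_zero.mp h2)
end

section
/- Let G be a group, H an infinite-dimensional real Hilbert space, and ρ a topologically irreducible representation of G on H by continuous linear automorphisms. Let W ⊆ H × H be a closed, complex-linear, G-invariant subspace of the complexification of H which is nonzero. Then W is infinite-dimensional (as a complex, equivalently real, vector space). -/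
/-- Let `G` be a group, `H` an infinite-dimensional real Hilbert space, `ρ` a
topologically irreducible representation of `G` on `H` by continuous linear automorphisms. The
complexification of `H` is modeled as `H × H` (the pair `(x, y)` standing for `x + i y`), with
multiplication by `i` given by `(x, y) ↦ (-y, x)` and with `ρ` acting diagonally. If
`W ⊆ H × H` is a closed, complex-linear, `G`-invariant subspace which is nonzero, then `W` is
infinite-dimensional (as a complex, equivalently real, vector space). -/
theorem infinite_dimensional_invariant_subspace_of_complexification
    {G : Type*} [Group G]
    {H : Type*} [NormedAddCommGroup H] [InnerProductSpace ℝ H] [CompleteSpace H]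
    (hinfdim : ¬ FiniteDimensional ℝ H)
    (ρ : G →* (H ≃L[ℝ] H))
    (hirr : ∀ V : Submodule ℝ H, IsClosed (V : Set H) →
      (∀ g : G, ∀ v ∈ V, ρ g v ∈ V) → V = ⊥ ∨ V = ⊤)
    (W : Submodule ℝ (H × H))
    (hclosed : IsClosed (W : Set (H × H)))
    (hcomplex : ∀ p ∈ W, ((-p.2, p.1) : H × H) ∈ W)
    (hinv : ∀ g : G, ∀ p ∈ W, ((ρ g p.1, ρ g p.2) : H × H) ∈ W)
    (hne_bot : W ≠ ⊥) :
    ¬ FiniteDimensional ℝ ↥W := by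
  intro hfd
  -- projection to first coordinate
  set V : Submodule ℝ H := W.map (LinearMap.fst ℝ H H) with hV
  haveI : FiniteDimensional ℝ ↥V := Module.Finite.map W (LinearMap.fst ℝ H H)
  have hVclosed : IsClosed (V : Set H) := Submodule.closed_of_finiteDimensional V
  have hVinv : ∀ g : G, ∀ v ∈ V, ρ g v ∈ V := by
    intro g v hv
    rcases hv with ⟨p, hp, rfl⟩
    exact ⟨(ρ g p.1, ρ g p.2), hinv g p hp, rfl⟩
  rcases hirr V hVclosed hVinv with hbot | htop
  · -- V = ⊥ forces W = ⊥
    apply hne_bot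
    ext p
    simp only [Submodule.mem_bot]
    constructor
    · intro hp
      have h1 : p.1 ∈ V := ⟨p, hp, rfl⟩
      have h2 : -p.2 ∈ V := ⟨(-p.2, p.1), hcomplex p hp, rfl⟩
      rw [hbot, Submodule.mem_bot] at h1 h2
      have : p.2 = 0 := by
        have := neg_eq_zero.mp h2
        exact this
      exact Prod.ext h1 this
    · rintro rfl; exact W.zero_mem
  · -- V = ⊤ contradicts infinite-dimensionality of H
    apply hinfdim
    have : FiniteDimensional ℝ ↥(⊤ : Submodule ℝ H) := htop ▸ ‹FiniteDimensional ℝ ↥V›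
    exact Module.Finite.equiv (Submodule.topEquiv)
end
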